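/- arXiv:2406.00736 — 5 statements merged into one kernel-verified Lean document; each statement's English description precedes it below -/
import Mathlib

section
/- Let E be a nonnegative Borel measure on ℝ, supported in [1,∞) and finite on compact sets, with E([1,x]) = o(x/log x) as x → ∞. Then the Mellin transform ∫_{[1,∞)} u^{−σ} dE(u) is finite for every σ > 1 and satisfies ∫_{[1,∞)} u^{−σ} dE(u) = o(log(1/(σ−1))) as σ → 1⁺. -/
open MeasureTheory Filter Topology Asymptotics
open scoped ENNReal

/-- Multiplicative convolution of two measures on ℝ: the pushforward of the
product measure under `(u, v) ↦ u * v`. -/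
noncomputable def mconv (μ ν : Measure ℝ) : Measure ℝ :=
  (μ.prod ν).map (fun p : ℝ × ℝ => p.1 * p.2)

/-- Multiplicative convolution powers: `mpow μ 0 = δ₁`, `mpow μ (n+1) = (mpow μ n) ∗ μ`. -/
noncomputable def mpow (μ : Measure ℝ) : ℕ → Measure ℝ
  | 0 => Measure.dirac 1
  | n + 1 => mconv (mpow μ n) μ

/-- Sum function of the convolution exponential of the signed measure `μ - ν`:
`exp^*(μ - ν)([1,x]) = ∑_{n,m} ((-1)^m / (n! m!)) (μ^{*n} ∗ ν^{*m})([1,x])`. -/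
noncomputable def expStarSum (μ ν : Measure ℝ) (x : ℝ) : ℝ :=
  ∑' n : ℕ, ∑' m : ℕ,
    ((-1 : ℝ) ^ m / ((n.factorial : ℝ) * (m.factorial : ℝ))) *
      ((mconv (mpow μ n) (mpow ν m)) (Set.Icc 1 x)).toReal

/-- The convolution exponential of a (nonnegative) measure: `exp^*(μ) = ∑ (1/n!) μ^{*n}`. -/
noncomputable def expStar (μ : Measure ℝ) : Measure ℝ :=
  Measure.sum (fun n => ((n.factorial : ℝ≥0∞))⁻¹ • mpow μ n)


private lemma exp_rpow' (x y : ℝ) : (Real.exp x) ^ y = Real.exp (x * y) := by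
  rw [← Real.exp_one_rpow (x * y), Real.rpow_mul (Real.exp_pos 1).le, Real.exp_one_rpow]

/-- Bound for `∑ e^{-nδ}/(n+1)`. -/
private lemma geom_div_bound {δ : ℝ} (h0 : 0 < δ) (h1 : δ ≤ 1) :
    ∑' n : ℕ, ENNReal.ofReal (Real.exp (-(n : ℝ) * δ) / (n + 1)) ≤
      ENNReal.ofReal (Real.log (1 / δ) + 4) := by
  have hδinv : 1 ≤ 1 / δ := by rw [le_div_iff₀ h0]; linarith
  have hlognn : 0 ≤ Real.log (1 / δ) := Real.log_nonneg hδinv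
  set M := ⌈1 / δ⌉₊ with hMdef
  have hM1 : 1 ≤ M := Nat.one_le_ceil_iff.2 (by linarith)
  have hMge : 1 / δ ≤ (M : ℝ) := Nat.le_ceil _
  have hMle : (M : ℝ) ≤ 2 / δ := by
    have := Nat.ceil_lt_add_one (by positivity : (0:ℝ) ≤ 1 / δ)
    have : (M : ℝ) < 1 / δ + 1 := this
    have h2 : 1 / δ + 1 ≤ 2 / δ := by
      have : (2:ℝ) / δ = 1 / δ + 1 / δ := by ring
      linarith
    linarith
  -- termwise bound
  have key : ∀ n : ℕ, ENNReal.ofReal (Real.exp (-(n : ℝ) * δ) / (n + 1)) ≤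
      (if n < M then ENNReal.ofReal (1 / ((n : ℝ) + 1)) else 0) +
        ENNReal.ofReal (δ * Real.exp (-(n : ℝ) * δ)) := by
    intro n
    by_cases hn : n < M
    · rw [if_pos hn]
      refine le_trans ?_ (le_add_of_nonneg_right zero_le)
      apply ENNReal.ofReal_le_ofReal
      have hexp : Real.exp (-(n : ℝ) * δ) ≤ 1 :=
        Real.exp_le_one_iff.2 (by nlinarith [n.cast_nonneg (α := ℝ)])
      have hpos : (0:ℝ) < (n : ℝ) + 1 := by positivity
      rw [div_le_div_iff₀ hpos hpos]
      nlinarith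
    · rw [if_neg hn, zero_add]
      apply ENNReal.ofReal_le_ofReal
      have hnM : (M : ℝ) ≤ n := by exact_mod_cast Nat.not_lt.1 hn
      have hd : 1 / δ ≤ (n : ℝ) + 1 := by linarith
      rw [div_le_iff₀ (by positivity)]
      have h1δ : 1 ≤ δ * ((n : ℝ) + 1) := by
        rw [div_le_iff₀ h0] at hd; linarith
      nlinarith [Real.exp_pos (-(n : ℝ) * δ)]
  calc ∑' n : ℕ, ENNReal.ofReal (Real.exp (-(n : ℝ) * δ) / (n + 1))
      ≤ ∑' n : ℕ, ((if n < M then ENNReal.ofReal (1 / ((n : ℝ) + 1)) else 0) +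
        ENNReal.ofReal (δ * Real.exp (-(n : ℝ) * δ))) := ENNReal.tsum_le_tsum key
    _ = (∑' n : ℕ, if n < M then ENNReal.ofReal (1 / ((n : ℝ) + 1)) else 0) +
        ∑' n : ℕ, ENNReal.ofReal (δ * Real.exp (-(n : ℝ) * δ)) := ENNReal.tsum_add
    _ ≤ ENNReal.ofReal (Real.log (1 / δ) + 2) + ENNReal.ofReal 2 := by
        gcongr
        · -- harmonic part
          rw [tsum_eq_sum (s := Finset.range M)
            (fun b hb => if_neg (by simpa using hb))]
          rw [Finset.sum_congr rfl (fun n hn => if_pos (Finset.mem_range.1 hn))]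
          rw [← ENNReal.ofReal_sum_of_nonneg (fun n _ => by positivity)]
          apply ENNReal.ofReal_le_ofReal
          have hsum : (∑ n ∈ Finset.range M, 1 / ((n : ℝ) + 1)) = (harmonic M : ℝ) := by
            rw [harmonic]
            push_cast
            refine Finset.sum_congr rfl fun n _ => ?_
            rw [one_div]
          rw [hsum]
          have h1 := harmonic_le_one_add_log M
          have hlogM : Real.log M ≤ Real.log 2 + Real.log (1 / δ) := by
            rw [← Real.log_mul (by norm_num) (by positivity)]
            apply Real.log_le_log (by exact_mod_cast hM1)
            calc (M:ℝ) ≤ 2 / δ := hMle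
              _ = 2 * (1 / δ) := by ring
          have hlog2 : Real.log 2 ≤ 1 := by
            have := Real.log_le_sub_one_of_pos (by norm_num : (0:ℝ) < 2)
            linarith
          linarith
        · -- geometric part
          have hrw : ∀ n : ℕ, ENNReal.ofReal (δ * Real.exp (-(n : ℝ) * δ)) =
              ENNReal.ofReal δ * ENNReal.ofReal (Real.exp (-δ)) ^ n := by
            intro n
            rw [ENNReal.ofReal_mul h0.le, ← ENNReal.ofReal_pow (Real.exp_nonneg _),
              ← Real.exp_nat_mul]
            ring_nf
          simp_rw [hrw]
          rw [ENNReal.tsum_mul_left, ENNReal.tsum_geometric]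
          have hexplt : Real.exp (-δ) < 1 := Real.exp_lt_one_iff.2 (by linarith)
          have hpos : 0 < 1 - Real.exp (-δ) := by linarith
          rw [show (1 : ℝ≥0∞) = ENNReal.ofReal 1 from ENNReal.ofReal_one.symm,
            ← ENNReal.ofReal_sub _ (Real.exp_nonneg _),
            ← ENNReal.ofReal_inv_of_pos hpos, ← ENNReal.ofReal_mul h0.le]
          apply ENNReal.ofReal_le_ofReal
          have hkey : Real.exp (-δ) * (1 + δ) ≤ 1 := by
            have h2 := Real.add_one_le_exp δ
            have h3 : Real.exp (-δ) * Real.exp δ = 1 := by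
              rw [← Real.exp_add]; simp
            nlinarith [Real.exp_pos (-δ)]
          have hhalf : δ / 2 ≤ 1 - Real.exp (-δ) := by nlinarith [Real.exp_pos (-δ)]
          have hhpos : (0:ℝ) < δ / 2 := by linarith
          calc δ * (1 - Real.exp (-δ))⁻¹ ≤ δ * (δ / 2)⁻¹ := by
                gcongr
              _ = 2 := by field_simp
    _ = ENNReal.ofReal (Real.log (1 / δ) + 4) := by
          rw [← ENNReal.ofReal_add (by linarith) (by norm_num)]
          ring_nf

private lemma covering : Set.Ici (1:ℝ) ⊆ ⋃ n : ℕ, Set.Ico (Real.exp n) (Real.exp (n+1)) := by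
  intro u hu
  have hu1 : (1:ℝ) ≤ u := hu
  have hupos : (0:ℝ) < u := by linarith
  have hlog : 0 ≤ Real.log u := Real.log_nonneg hu1
  refine Set.mem_iUnion.2 ⟨⌊Real.log u⌋₊, ?_, ?_⟩
  · calc Real.exp (⌊Real.log u⌋₊ : ℝ) ≤ Real.exp (Real.log u) :=
        Real.exp_le_exp.2 (Nat.floor_le hlog)
      _ = u := Real.exp_log hupos
  · calc u = Real.exp (Real.log u) := (Real.exp_log hupos).symm
      _ < Real.exp ((⌊Real.log u⌋₊ : ℝ) + 1) :=
        Real.exp_lt_exp.2 (Nat.lt_floor_add_one _)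

private lemma step1 (E : Measure ℝ) {σ : ℝ} (hσ : 0 ≤ σ) :
    ∫⁻ u in Set.Ici (1 : ℝ), ENNReal.ofReal (u ^ (-σ)) ∂E ≤
      ∑' n : ℕ, ENNReal.ofReal (Real.exp (-(n : ℝ) * σ)) *
        E (Set.Icc 1 (Real.exp ((n : ℝ) + 1))) := by
  refine le_trans (lintegral_mono_set covering) ?_
  refine le_trans (lintegral_iUnion_le _ _) ?_
  apply ENNReal.tsum_le_tsum
  intro n
  have hbound : ∀ u ∈ Set.Ico (Real.exp (n:ℝ)) (Real.exp ((n:ℝ)+1)),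
      ENNReal.ofReal (u ^ (-σ)) ≤ ENNReal.ofReal (Real.exp (-(n : ℝ) * σ)) := by
    intro u hu
    apply ENNReal.ofReal_le_ofReal
    have h1 : (Real.exp (n:ℝ)) ^ (-σ) = Real.exp (-(n:ℝ) * σ) := by
      rw [exp_rpow']; ring_nf
    calc u ^ (-σ) ≤ (Real.exp (n:ℝ)) ^ (-σ) :=
          Real.rpow_le_rpow_of_nonpos (Real.exp_pos _) hu.1 (by linarith)
      _ = Real.exp (-(n:ℝ) * σ) := h1
  calc ∫⁻ u in Set.Ico (Real.exp (n:ℝ)) (Real.exp ((n:ℝ)+1)), ENNReal.ofReal (u ^ (-σ)) ∂E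
      ≤ ∫⁻ _ in Set.Ico (Real.exp (n:ℝ)) (Real.exp ((n:ℝ)+1)),
          ENNReal.ofReal (Real.exp (-(n : ℝ) * σ)) ∂E :=
        setLIntegral_mono' measurableSet_Ico hbound
    _ = ENNReal.ofReal (Real.exp (-(n : ℝ) * σ)) *
          E (Set.Ico (Real.exp (n:ℝ)) (Real.exp ((n:ℝ)+1))) := by
        rw [MeasureTheory.setLIntegral_const]
    _ ≤ ENNReal.ofReal (Real.exp (-(n : ℝ) * σ)) * E (Set.Icc 1 (Real.exp ((n : ℝ) + 1))) := by
        gcongr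
        intro x hx
        exact ⟨le_trans (Real.one_le_exp (by positivity)) hx.1, hx.2.le⟩

private lemma mainBound (E : Measure ℝ) [IsLocallyFiniteMeasure E]
    (hE : (fun x : ℝ => ((E (Set.Icc 1 x)).toReal)) =o[atTop] fun x : ℝ => x / Real.log x)
    {ε : ℝ} (hε : 0 < ε) :
    ∃ C : ℝ, 0 ≤ C ∧ ∀ σ : ℝ, 1 < σ → σ ≤ 2 →
      ∫⁻ u in Set.Ici (1 : ℝ), ENNReal.ofReal (u ^ (-σ)) ∂E ≤
        ENNReal.ofReal (C + ε * Real.log (1 / (σ - 1))) := by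
  set c : ℝ := ε / Real.exp 1 with hc
  have hcpos : 0 < c := by positivity
  obtain ⟨x₀, hx₀⟩ := eventually_atTop.1 (hE.def hcpos)
  set N : ℕ := ⌈x₀⌉₊ + 1 with hN
  -- the tail estimate
  have htail : ∀ n : ℕ, N ≤ n →
      (E (Set.Icc 1 (Real.exp ((n:ℝ)+1)))).toReal ≤ c * Real.exp ((n:ℝ)+1) / ((n:ℝ)+1) := by
    intro n hn
    have hx : x₀ ≤ Real.exp ((n:ℝ)+1) := by
      have h1 : x₀ ≤ (⌈x₀⌉₊ : ℝ) := Nat.le_ceil _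
      have h2 : ((⌈x₀⌉₊ : ℕ) : ℝ) ≤ (n : ℝ) := by
        exact_mod_cast le_trans (Nat.le_succ _) hn
      have h3 : (n : ℝ) + 1 + 1 ≤ Real.exp ((n:ℝ)+1) := Real.add_one_le_exp _
      linarith
    have := hx₀ _ hx
    have hlog : Real.log (Real.exp ((n:ℝ)+1)) = (n:ℝ)+1 := Real.log_exp _
    rw [Real.norm_eq_abs, Real.norm_eq_abs, abs_of_nonneg ENNReal.toReal_nonneg] at this
    have hnn : (0:ℝ) < (n:ℝ) + 1 := by positivity
    have habs : |Real.exp ((n:ℝ)+1) / Real.log (Real.exp ((n:ℝ)+1))| =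
        Real.exp ((n:ℝ)+1) / ((n:ℝ)+1) := by
      rw [hlog, abs_of_nonneg (by positivity)]
    rw [habs] at this
    calc (E (Set.Icc 1 (Real.exp ((n:ℝ)+1)))).toReal ≤
        c * (Real.exp ((n:ℝ)+1) / ((n:ℝ)+1)) := this
      _ = c * Real.exp ((n:ℝ)+1) / ((n:ℝ)+1) := by ring
  -- finiteness of E on compacts
  have hfin : ∀ x : ℝ, E (Set.Icc 1 x) ≠ ⊤ := fun x => (isCompact_Icc.measure_lt_top).ne
  set C₀ : ℝ := (E (Set.Icc 1 (Real.exp (N:ℝ)))).toReal with hC₀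
  have hC₀nn : 0 ≤ C₀ := ENNReal.toReal_nonneg
  refine ⟨N * C₀ + 4 * ε, by positivity, ?_⟩
  intro σ hσ1 hσ2
  set δ : ℝ := σ - 1 with hδ
  have hδ0 : 0 < δ := by simp [hδ]; linarith
  have hδ1 : δ ≤ 1 := by simp [hδ]; linarith
  have hlognn : 0 ≤ Real.log (1/δ) := Real.log_nonneg (by rw [le_div_iff₀ hδ0]; linarith)
  refine le_trans (step1 E (by linarith)) ?_
  -- termwise bound for the series
  have key : ∀ n : ℕ, ENNReal.ofReal (Real.exp (-(n : ℝ) * σ)) *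
      E (Set.Icc 1 (Real.exp ((n : ℝ) + 1))) ≤
      (if n < N then E (Set.Icc 1 (Real.exp (N:ℝ))) else 0) +
        ENNReal.ofReal (c * Real.exp 1 * (Real.exp (-(n : ℝ) * δ) / ((n:ℝ) + 1))) := by
    intro n
    by_cases hn : n < N
    · rw [if_pos hn]
      refine le_trans ?_ (le_add_of_nonneg_right zero_le)
      calc ENNReal.ofReal (Real.exp (-(n : ℝ) * σ)) * E (Set.Icc 1 (Real.exp ((n : ℝ) + 1)))
          ≤ 1 * E (Set.Icc 1 (Real.exp ((n : ℝ) + 1))) := by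
            gcongr
            rw [show (1:ℝ≥0∞) = ENNReal.ofReal 1 from ENNReal.ofReal_one.symm]
            apply ENNReal.ofReal_le_ofReal
            apply Real.exp_le_one_iff.2
            nlinarith [n.cast_nonneg (α := ℝ)]
        _ = E (Set.Icc 1 (Real.exp ((n : ℝ) + 1))) := one_mul _
        _ ≤ E (Set.Icc 1 (Real.exp (N:ℝ))) := by
            apply measure_mono
            apply Set.Icc_subset_Icc le_rfl
            apply Real.exp_le_exp.2
            have : (n:ℝ) + 1 ≤ (N:ℝ) := by exact_mod_cast Nat.succ_le_of_lt hn
            linarith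
    · rw [if_neg hn, zero_add]
      have hn' : N ≤ n := Nat.not_lt.1 hn
      rw [← ENNReal.ofReal_toReal (hfin (Real.exp ((n:ℝ)+1))),
        ← ENNReal.ofReal_mul (Real.exp_nonneg _)]
      apply ENNReal.ofReal_le_ofReal
      have h1 := htail n hn'
      have hnn : (0:ℝ) < (n:ℝ) + 1 := by positivity
      have hEnn : 0 ≤ (E (Set.Icc 1 (Real.exp ((n:ℝ)+1)))).toReal := ENNReal.toReal_nonneg
      calc Real.exp (-(n : ℝ) * σ) * (E (Set.Icc 1 (Real.exp ((n:ℝ)+1)))).toReal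
          ≤ Real.exp (-(n : ℝ) * σ) * (c * Real.exp ((n:ℝ)+1) / ((n:ℝ)+1)) := by
            gcongr
        _ = c * Real.exp 1 * (Real.exp (-(n : ℝ) * δ) / ((n:ℝ) + 1)) := by
            have hxy : Real.exp (-(n:ℝ)*σ) * Real.exp ((n:ℝ)+1)
                = Real.exp 1 * Real.exp (-(n:ℝ)*(σ-1)) := by
              rw [← Real.exp_add, ← Real.exp_add]; congr 1; ring
            rw [hδ, div_eq_mul_inv, div_eq_mul_inv,
              show Real.exp (-(n:ℝ)*σ) * (c * Real.exp ((n:ℝ)+1) * ((n:ℝ)+1)⁻¹)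
                = (Real.exp (-(n:ℝ)*σ) * Real.exp ((n:ℝ)+1)) * (c * ((n:ℝ)+1)⁻¹) from by ring,
              hxy]
            ring
  calc (∑' n : ℕ, ENNReal.ofReal (Real.exp (-(n : ℝ) * σ)) *
        E (Set.Icc 1 (Real.exp ((n : ℝ) + 1))))
      ≤ ∑' n : ℕ, ((if n < N then E (Set.Icc 1 (Real.exp (N:ℝ))) else 0) +
        ENNReal.ofReal (c * Real.exp 1 * (Real.exp (-(n : ℝ) * δ) / ((n:ℝ) + 1)))) :=
        ENNReal.tsum_le_tsum key
    _ = (∑' n : ℕ, if n < N then E (Set.Icc 1 (Real.exp (N:ℝ))) else 0) +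
        ∑' n : ℕ, ENNReal.ofReal (c * Real.exp 1 * (Real.exp (-(n : ℝ) * δ) / ((n:ℝ) + 1))) :=
        ENNReal.tsum_add
    _ ≤ ENNReal.ofReal (N * C₀) + ENNReal.ofReal (ε * (Real.log (1/δ) + 4)) := by
        gcongr
        · rw [tsum_eq_sum (s := Finset.range N) (fun b hb => if_neg (by simpa using hb))]
          rw [Finset.sum_congr rfl (fun n hn => if_pos (Finset.mem_range.1 hn))]
          rw [Finset.sum_const, Finset.card_range,
            ← ENNReal.ofReal_toReal (hfin (Real.exp (N:ℝ))), ← hC₀]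
          rw [nsmul_eq_mul, ← ENNReal.ofReal_natCast N, ← ENNReal.ofReal_mul (by positivity)]
        · have : ∀ n : ℕ, ENNReal.ofReal (c * Real.exp 1 * (Real.exp (-(n : ℝ) * δ) / ((n:ℝ) + 1)))
              = ENNReal.ofReal (c * Real.exp 1) *
                ENNReal.ofReal (Real.exp (-(n : ℝ) * δ) / ((n:ℝ) + 1)) := fun n =>
            ENNReal.ofReal_mul (by positivity)
          simp_rw [this]
          rw [ENNReal.tsum_mul_left]
          calc ENNReal.ofReal (c * Real.exp 1) *
              ∑' n : ℕ, ENNReal.ofReal (Real.exp (-(n : ℝ) * δ) / ((n:ℝ) + 1))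
              ≤ ENNReal.ofReal (c * Real.exp 1) * ENNReal.ofReal (Real.log (1/δ) + 4) := by
                gcongr
                exact geom_div_bound hδ0 hδ1
            _ = ENNReal.ofReal (ε * (Real.log (1/δ) + 4)) := by
                rw [← ENNReal.ofReal_mul (by positivity)]
                congr 1
                rw [hc]
                field_simp
    _ ≤ ENNReal.ofReal ((N * C₀ + 4 * ε) + ε * Real.log (1 / (σ - 1))) := by
        rw [← ENNReal.ofReal_add (by positivity) (by positivity)]
        apply ENNReal.ofReal_le_ofReal
        rw [← hδ]
        nlinarith [hlognn]

private lemma tendsLog : Tendsto (fun σ : ℝ => Real.log (1/(σ-1))) (𝓝[>] (1:ℝ)) atTop := by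
  have t1 : Tendsto (fun σ : ℝ => σ - 1) (𝓝[>] (1:ℝ)) (𝓝[>] (0:ℝ)) := by
    apply tendsto_nhdsWithin_of_tendsto_nhds_of_eventually_within
    · exact ((continuous_id.sub continuous_const).tendsto' 1 0 (by norm_num)).mono_left
        nhdsWithin_le_nhds
    · exact eventually_nhdsWithin_of_forall fun x hx => by
        simp only [Set.mem_Ioi] at hx ⊢; linarith
  have t2 : Tendsto (fun σ : ℝ => Real.log (σ - 1)) (𝓝[>] (1:ℝ)) atBot :=
    Real.tendsto_log_nhdsGT_zero.comp t1
  simp only [one_div, Real.log_inv]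
  exact tendsto_neg_atBot_atTop.comp t2

theorem statement5'
    (E : Measure ℝ) [IsLocallyFiniteMeasure E] (hE0 : E (Set.Iio 1) = 0)
    (hE : (fun x : ℝ => ((E (Set.Icc 1 x)).toReal)) =o[atTop] fun x : ℝ => x / Real.log x) :
    (∀ σ : ℝ, 1 < σ → ∫⁻ u in Set.Ici (1 : ℝ), ENNReal.ofReal (u ^ (-σ)) ∂E < ⊤) ∧
    (fun σ : ℝ => (∫⁻ u in Set.Ici (1 : ℝ), ENNReal.ofReal (u ^ (-σ)) ∂E).toReal)
      =o[𝓝[>] (1 : ℝ)] fun σ : ℝ => Real.log (1 / (σ - 1)) := by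
  constructor
  · intro σ hσ
    obtain ⟨C1, hC1nn, hC1⟩ := mainBound E hE one_pos
    set σ' := min σ (3/2 : ℝ) with hσ'
    have hσ'1 : 1 < σ' := lt_min hσ (by norm_num)
    have hσ'2 : σ' ≤ 2 := le_trans (min_le_right _ _) (by norm_num)
    have hmono : ∫⁻ u in Set.Ici (1:ℝ), ENNReal.ofReal (u ^ (-σ)) ∂E ≤
        ∫⁻ u in Set.Ici (1:ℝ), ENNReal.ofReal (u ^ (-σ')) ∂E := by
      apply setLIntegral_mono' measurableSet_Ici
      intro u hu
      apply ENNReal.ofReal_le_ofReal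
      exact Real.rpow_le_rpow_of_exponent_le hu (neg_le_neg (min_le_left _ _))
    exact lt_of_le_of_lt (hmono.trans (hC1 σ' hσ'1 hσ'2)) ENNReal.ofReal_lt_top
  · rw [isLittleO_iff]
    intro ε hε
    obtain ⟨C, hCnn, hC⟩ := mainBound E hE (half_pos hε)
    have h1 : Set.Ioo (1:ℝ) 2 ∈ 𝓝[>] (1:ℝ) :=
      Ioo_mem_nhdsGT_of_mem ⟨le_refl 1, one_lt_two⟩
    have h2 := tendsLog.eventually_ge_atTop (2 * C / ε)
    filter_upwards [Filter.eventually_of_mem h1 (fun x hx => hx), h2] with σ hσIoo hσlog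
    have hLnn : 0 ≤ Real.log (1/(σ-1)) := by
      refine le_trans ?_ hσlog
      positivity
    have hbound := hC σ hσIoo.1 hσIoo.2.le
    have hM : (∫⁻ u in Set.Ici (1:ℝ), ENNReal.ofReal (u ^ (-σ)) ∂E).toReal ≤
        C + ε / 2 * Real.log (1/(σ-1)) :=
      ENNReal.toReal_le_of_le_ofReal (by positivity) hbound
    rw [Real.norm_eq_abs, Real.norm_eq_abs, abs_of_nonneg ENNReal.toReal_nonneg,
      abs_of_nonneg hLnn]
    have hCle : C ≤ ε / 2 * Real.log (1/(σ-1)) := by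
      rw [div_le_iff₀ hε] at hσlog
      nlinarith
    linarith

/-- if `E([1,x]) = o(x/log x)` then the Mellin transform
`∫_{[1,∞)} u^{-σ} dE(u)` is finite for every `σ > 1` and is
`o(log(1/(σ-1)))` as `σ → 1⁺`. -/
theorem statement5
    (E : Measure ℝ) [IsLocallyFiniteMeasure E] (hE0 : E (Set.Iio 1) = 0)
    (hE : (fun x : ℝ => ((E (Set.Icc 1 x)).toReal)) =o[atTop] fun x : ℝ => x / Real.log x) :
    (∀ σ : ℝ, 1 < σ → ∫⁻ u in Set.Ici (1 : ℝ), ENNReal.ofReal (u ^ (-σ)) ∂E < ⊤) ∧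
    (fun σ : ℝ => (∫⁻ u in Set.Ici (1 : ℝ), ENNReal.ofReal (u ^ (-σ)) ∂E).toReal)
      =o[𝓝[>] (1 : ℝ)] fun σ : ℝ => Real.log (1 / (σ - 1)) :=
  statement5' E hE0 hE
end

section
/- Let F be a nonnegative Borel measure on ℝ supported in [1,∞), and let ε > 0 and C > 0 be such that ∫_{[1,∞)} u^{−σ} dF(u) ≤ C·(σ−1)^{−ε} for all σ ∈ (1,2]. Then there exists C' > 0 such that ∫_{[1,x]} u^{−1} dF(u) ≤ C'·(log x)^ε for all x ≥ e. (In fact one may take C' = e·C.) -/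
open MeasureTheory Filter Topology Asymptotics
open scoped ENNReal

/-- elementary Tauberian step: if `∫_{[1,∞)} u^{-σ} dF(u) ≤ C (σ-1)^{-ε}`
for all `σ ∈ (1,2]`, then there is `C' > 0` with
`∫_{[1,x]} u⁻¹ dF(u) ≤ C' (log x)^ε` for all `x ≥ e`. -/
theorem statement6
    (F : Measure ℝ) (hF0 : F (Set.Iio 1) = 0)
    (ε C : ℝ) (hε : 0 < ε) (hC : 0 < C)
    (h : ∀ σ ∈ Set.Ioc (1 : ℝ) 2,
      ∫⁻ u in Set.Ici (1 : ℝ), ENNReal.ofReal (u ^ (-σ)) ∂F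
        ≤ ENNReal.ofReal (C * (σ - 1) ^ (-ε))) :
    ∃ C' > (0 : ℝ), ∀ x ≥ Real.exp 1,
      ∫⁻ u in Set.Icc (1 : ℝ) x, ENNReal.ofReal u⁻¹ ∂F
        ≤ ENNReal.ofReal (C' * (Real.log x) ^ ε) := by

  refine ⟨Real.exp 1 * C, by positivity, fun x hx => ?_⟩
  have hx1 : (1 : ℝ) < x := lt_of_lt_of_le (by
    have := Real.exp_pos 1
    nlinarith [Real.add_one_le_exp (1:ℝ)]) hx
  have hlog : 1 ≤ Real.log x := by
    rw [← Real.log_exp 1]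
    exact Real.log_le_log (Real.exp_pos 1) hx
  have hlogpos : 0 < Real.log x := lt_of_lt_of_le one_pos hlog
  set σ : ℝ := 1 + (Real.log x)⁻¹ with hσdef
  have hσ : σ ∈ Set.Ioc (1 : ℝ) 2 := by
    constructor
    · simp only [hσdef, lt_add_iff_pos_right]
      positivity
    · have h1 : (Real.log x)⁻¹ ≤ 1 := by
        rw [inv_le_one_iff₀]; right; exact hlog
      rw [hσdef]; linarith
  have key : ∀ u ∈ Set.Icc (1 : ℝ) x,
      ENNReal.ofReal u⁻¹ ≤ ENNReal.ofReal (Real.exp 1 * u ^ (-σ)) := by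
    intro u hu
    apply ENNReal.ofReal_le_ofReal
    have hu1 : (1 : ℝ) ≤ u := hu.1
    have hu0 : (0 : ℝ) < u := lt_of_lt_of_le one_pos hu1
    have hx0 : (0 : ℝ) < x := lt_trans one_pos hx1
    have hxσ : x ^ (σ - 1) = Real.exp 1 := by
      rw [hσdef]
      have : (1 : ℝ) + (Real.log x)⁻¹ - 1 = (Real.log x)⁻¹ := by ring
      rw [this, Real.rpow_def_of_pos hx0, mul_inv_cancel₀ (ne_of_gt hlogpos)]
    have huσ : u ^ (σ - 1) ≤ Real.exp 1 := by
      rw [← hxσ]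
      exact Real.rpow_le_rpow (le_of_lt hu0) hu.2 (by
        have := hσ.1; linarith)
    calc u⁻¹ = u ^ (σ - 1) * u ^ (-σ) := by
          rw [← Real.rpow_add hu0]
          have h2 : σ - 1 + -σ = -1 := by ring
          rw [h2, Real.rpow_neg_one]
      _ ≤ Real.exp 1 * u ^ (-σ) :=
          mul_le_mul_of_nonneg_right huσ (Real.rpow_nonneg (le_of_lt hu0) _)
  calc ∫⁻ u in Set.Icc (1 : ℝ) x, ENNReal.ofReal u⁻¹ ∂F
      ≤ ∫⁻ u in Set.Icc (1 : ℝ) x, ENNReal.ofReal (Real.exp 1 * u ^ (-σ)) ∂F :=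
        setLIntegral_mono' measurableSet_Icc key
    _ ≤ ∫⁻ u in Set.Ici (1 : ℝ), ENNReal.ofReal (Real.exp 1 * u ^ (-σ)) ∂F :=
        lintegral_mono_set (fun u hu => hu.1)
    _ = ENNReal.ofReal (Real.exp 1) * ∫⁻ u in Set.Ici (1 : ℝ), ENNReal.ofReal (u ^ (-σ)) ∂F := by
        simp_rw [ENNReal.ofReal_mul (le_of_lt (Real.exp_pos 1))]
        rw [lintegral_const_mul' _ _ ENNReal.ofReal_ne_top]
    _ ≤ ENNReal.ofReal (Real.exp 1) * ENNReal.ofReal (C * (σ - 1) ^ (-ε)) :=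
        mul_le_mul_right (h σ hσ) _
    _ = ENNReal.ofReal (Real.exp 1 * C * Real.log x ^ ε) := by
        rw [← ENNReal.ofReal_mul (le_of_lt (Real.exp_pos 1))]
        congr 1
        have : σ - 1 = (Real.log x)⁻¹ := by rw [hσdef]; ring
        rw [this, ← Real.rpow_neg_one (Real.log x),
          ← Real.rpow_mul (le_of_lt hlogpos)]
        norm_num
        ring
end

section
/- There exist real constants c₁ and c₂ such that, as σ → 1⁺, ∫_{e^e}^∞ u^{−σ}/(log u · log log u) du = log log(1/(σ−1)) + c₁ + c₂/log(1/(σ−1)) + o(1/log(1/(σ−1))). -/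
open MeasureTheory Filter Topology Asymptotics
open Set Real

lemma log_facts {u : ℝ} (hu : Real.exp (Real.exp 1) ≤ u) :
    1 ≤ Real.log (Real.log u) ∧ Real.exp 1 ≤ Real.log u ∧ 2 < u := by
  have h1 : (1:ℝ) < Real.exp 1 := by have := Real.exp_one_gt_d9; linarith
  have hpos : (0:ℝ) < Real.exp (Real.exp 1) := Real.exp_pos _
  have hue : Real.exp 1 ≤ Real.log u := by
    rw [← Real.log_exp (Real.exp 1)]
    exact Real.log_le_log (Real.exp_pos _) hu
  refine ⟨?_, hue, ?_⟩
  · calc (1:ℝ) = Real.log (Real.exp 1) := (Real.log_exp 1).symm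
      _ ≤ Real.log (Real.log u) := Real.log_le_log (Real.exp_pos _) hue
  · have : Real.exp 1 < u := lt_of_lt_of_le (by
      calc Real.exp 1 = Real.exp 1 ^ (1:ℕ) := by ring
        _ < Real.exp (Real.exp 1) := by
          rw [pow_one]; exact Real.exp_lt_exp.2 (by linarith)) hu
    nlinarith [Real.exp_one_gt_d9]

lemma cont_on1 {σ : ℝ} : ContinuousOn
    (fun u : ℝ => u ^ (-σ) / (Real.log u * Real.log (Real.log u)))
    (Set.Ici (Real.exp (Real.exp 1))) := by
  intro u hu
  obtain ⟨h1, h2, h3⟩ := log_facts hu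
  have hlu : (0:ℝ) < Real.log u := by nlinarith [Real.exp_pos 1]
  apply ContinuousAt.continuousWithinAt
  apply ContinuousAt.div
  · exact Real.continuousAt_rpow_const _ _ (Or.inl (by positivity))
  · exact (Real.continuousAt_log (by positivity)).mul
      ((Real.continuousAt_log (by positivity)).comp (Real.continuousAt_log (by positivity)))
  · positivity

lemma aux_int1 {σ : ℝ} (hσ : 1 < σ) :
    IntegrableOn (fun u : ℝ => u ^ (-σ) / (Real.log u * Real.log (Real.log u)))
      (Set.Ici (Real.exp (Real.exp 1))) := by
  have hpos : (0:ℝ) < Real.exp (Real.exp 1) := Real.exp_pos _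
  have hmono : IntegrableOn (fun u : ℝ => u ^ (-σ)) (Set.Ici (Real.exp (Real.exp 1))) := by
    rw [integrableOn_Ici_iff_integrableOn_Ioi]
    exact integrableOn_Ioi_rpow_of_lt (by linarith) hpos
  refine MeasureTheory.Integrable.mono hmono (cont_on1.aestronglyMeasurable measurableSet_Ici) ?_
  rw [ae_restrict_iff' measurableSet_Ici]
  apply ae_of_all
  intro u hu
  obtain ⟨h1, h2, h3⟩ := log_facts hu
  have hu0 : (0:ℝ) < u := by linarith
  have hlu : (0:ℝ) < Real.log u := by nlinarith [Real.exp_pos 1]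
  have hd : (1:ℝ) ≤ Real.log u * Real.log (Real.log u) := by nlinarith [Real.exp_one_gt_d9]
  rw [Real.norm_eq_abs, Real.norm_eq_abs, abs_div, abs_of_nonneg (Real.rpow_nonneg hu0.le _),
    abs_of_pos (by nlinarith : (0:ℝ) < Real.log u * Real.log (Real.log u))]
  exact div_le_self (Real.rpow_nonneg hu0.le _) hd


lemma cont_on2 {ε : ℝ} : ContinuousOn (fun t : ℝ => Real.exp (-(ε*t)) / (t * Real.log t))
    (Set.Ici (Real.exp 1)) := by
  intro t ht
  have h1 : (1:ℝ) < Real.exp 1 := by have := Real.exp_one_gt_d9; linarith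
  have ht1 : (1:ℝ) < t := lt_of_lt_of_le h1 ht
  have hlt : (0:ℝ) < Real.log t := Real.log_pos ht1
  apply ContinuousAt.continuousWithinAt
  apply ContinuousAt.div
  · exact (Real.continuous_exp.continuousAt).comp (by fun_prop)
  · exact continuousAt_id.mul (Real.continuousAt_log (by positivity))
  · positivity

lemma aux_int2 {ε : ℝ} (hε : 0 < ε) :
    IntegrableOn (fun t : ℝ => Real.exp (-(ε*t)) / (t * Real.log t)) (Set.Ici (Real.exp 1)) := by
  have h1 : (1:ℝ) < Real.exp 1 := by have := Real.exp_one_gt_d9; linarith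
  have hmono : IntegrableOn (fun t : ℝ => Real.exp (-ε*t)) (Set.Ici (Real.exp 1)) := by
    rw [integrableOn_Ici_iff_integrableOn_Ioi]
    exact exp_neg_integrableOn_Ioi _ hε
  refine MeasureTheory.Integrable.mono hmono (cont_on2.aestronglyMeasurable measurableSet_Ici) ?_
  rw [ae_restrict_iff' measurableSet_Ici]
  apply ae_of_all
  intro t ht
  have ht1 : (1:ℝ) < t := lt_of_lt_of_le h1 ht
  have hlt : (0:ℝ) < Real.log t := Real.log_pos ht1
  have hd : (1:ℝ) ≤ t * Real.log t := by
    have hl1 : (1:ℝ) ≤ Real.log t := by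
      rw [Real.le_log_iff_exp_le (by positivity)]; simpa using ht
    nlinarith
  rw [Real.norm_eq_abs, Real.norm_eq_abs, abs_div, abs_of_pos (Real.exp_pos _),
    abs_of_pos (by nlinarith : (0:ℝ) < t * Real.log t),
    abs_of_pos (Real.exp_pos _)]
  have : Real.exp (-(ε*t)) = Real.exp (-ε*t) := by ring_nf
  rw [this]
  exact div_le_self (Real.exp_pos _).le hd

lemma step1_s8 {σ : ℝ} (hσ : 1 < σ) :
    (∫ u in Set.Ici (Real.exp (Real.exp 1)), u ^ (-σ) / (Real.log u * Real.log (Real.log u)))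
      = ∫ t in Set.Ioi (Real.exp 1), Real.exp (-((σ-1)*t)) / (t * Real.log t) := by
  rw [MeasureTheory.integral_Ici_eq_integral_Ioi]
  have h1 : (1:ℝ) < Real.exp 1 := by have := Real.exp_one_gt_d9; linarith
  have key := integral_comp_mul_deriv_Ioi (f := Real.exp) (f' := Real.exp)
    (g := fun u : ℝ => u ^ (-σ) / (Real.log u * Real.log (Real.log u))) (a := Real.exp 1)
    (Real.continuous_exp.continuousOn) (Real.tendsto_exp_atTop)
    (fun x _ => (Real.hasDerivAt_exp x).hasDerivWithinAt)
    ?_ ?_ ?_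
  · rw [← key]
    refine (setIntegral_congr_fun measurableSet_Ioi ?_).symm
    intro t ht
    have ht1 : (1:ℝ) < t := lt_trans h1 ht
    have hlt : (0:ℝ) < Real.log t := Real.log_pos ht1
    simp only [Function.comp]
    rw [Real.log_exp, Real.rpow_def_of_pos (Real.exp_pos t), Real.log_exp]
    rw [div_mul_eq_mul_div, ← Real.exp_add]
    congr 1
    ring
  · apply cont_on1.mono
    intro u hu
    obtain ⟨x, hx, rfl⟩ := hu
    exact Real.exp_le_exp.2 hx.le
  · apply (aux_int1 hσ).mono_set
    intro u hu
    obtain ⟨x, hx, rfl⟩ := hu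
    exact Real.exp_le_exp.2 hx
  · rw [integrableOn_congr_fun ?_ measurableSet_Ici]
    · exact (aux_int2 (by linarith : 0 < σ - 1)).mono_set (fun x hx => hx)
    · intro t ht
      have ht1 : (1:ℝ) < t := lt_of_lt_of_le h1 ht
      have hlt : (0:ℝ) < Real.log t := Real.log_pos ht1
      simp only [Function.comp]
      rw [Real.log_exp, Real.rpow_def_of_pos (Real.exp_pos t), Real.log_exp]
      rw [div_mul_eq_mul_div, ← Real.exp_add]
      congr 1
      ring

lemma step2 {ε : ℝ} (hε : 0 < ε) :
    (∫ t in Set.Ioi (Real.exp 1), Real.exp (-(ε*t)) / (t * Real.log t))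
      = ∫ x in Set.Ioi (ε * Real.exp 1),
          Real.exp (-x) / (x * (Real.log ε⁻¹ + Real.log x)) := by
  have key := MeasureTheory.integral_comp_mul_left_Ioi
    (g := fun x : ℝ => ε * (Real.exp (-x) / (x * (Real.log ε⁻¹ + Real.log x))))
    (a := Real.exp 1) hε
  have h1 : (1:ℝ) < Real.exp 1 := by have := Real.exp_one_gt_d9; linarith
  rw [setIntegral_congr_fun measurableSet_Ioi (g := fun t : ℝ =>
      ε * (Real.exp (-(ε*t)) / ((ε*t) * (Real.log ε⁻¹ + Real.log (ε*t)))))]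
  · rw [key, MeasureTheory.integral_const_mul, smul_eq_mul, ← mul_assoc,
      inv_mul_cancel₀ (ne_of_gt hε), one_mul]
  · intro t ht
    have ht0 : (0:ℝ) < t := by have := lt_trans h1 ht; linarith
    have hlog : Real.log (ε * t) = Real.log ε + Real.log t :=
      Real.log_mul (ne_of_gt hε) (ne_of_gt ht0)
    have hli : Real.log ε⁻¹ = -Real.log ε := Real.log_inv ε
    have hden : Real.log ε⁻¹ + Real.log (ε * t) = Real.log t := by rw [hlog, hli]; ring
    have hεne : ε ≠ 0 := ne_of_gt hε
    simp only
    rw [hden]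
    have hlt : (0:ℝ) < Real.log t := Real.log_pos (lt_trans h1 ht)
    field_simp

lemma Lgt2 {ε : ℝ} (hε : 0 < ε) (hε2 : ε < Real.exp (-2)) : 2 < Real.log ε⁻¹ := by
  have h := Real.log_lt_log hε hε2
  rw [Real.log_exp] at h
  rw [Real.log_inv]
  linarith

lemma logm {ε : ℝ} (hε : 0 < ε) :
    Real.log (ε * Real.exp 1) = 1 - Real.log ε⁻¹ := by
  rw [Real.log_mul (ne_of_gt hε) (ne_of_gt (Real.exp_pos 1)), Real.log_exp, Real.log_inv]
  ring

lemma m_lt_one {ε : ℝ} (hε : 0 < ε) (hε2 : ε < Real.exp (-2)) : ε * Real.exp 1 < 1 := by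
  have h := Lgt2 hε hε2
  have h2 := logm hε
  by_contra hc
  push_neg at hc
  have : (0:ℝ) ≤ Real.log (ε * Real.exp 1) := Real.log_nonneg hc
  linarith

lemma denom_ge {ε x : ℝ} (hε : 0 < ε) (hx : ε * Real.exp 1 ≤ x) :
    1 ≤ Real.log ε⁻¹ + Real.log x := by
  have hm0 : 0 < ε * Real.exp 1 := by positivity
  have := Real.log_le_log hm0 hx
  rw [logm hε] at this
  linarith

lemma step3 {ε : ℝ} (hε : 0 < ε) (hε2 : ε < Real.exp (-2)) :
    (∫ x in Set.Ioc (ε * Real.exp 1) 1,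
        Real.log ε⁻¹ / (x * (Real.log ε⁻¹ + Real.log x)))
      = Real.log ε⁻¹ * Real.log (Real.log ε⁻¹) := by
  set L := Real.log ε⁻¹ with hL
  have hLpos : 2 < L := Lgt2 hε hε2
  have hm0 : 0 < ε * Real.exp 1 := by positivity
  have hm1 : ε * Real.exp 1 ≤ 1 := (m_lt_one hε hε2).le
  have hderiv : ∀ x ∈ Set.uIcc (ε * Real.exp 1) 1,
      HasDerivAt (fun x => L * Real.log (L + Real.log x))
        (L / (x * (L + Real.log x))) x := by
    intro x hx
    rw [Set.uIcc_of_le hm1] at hx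
    have hx0 : 0 < x := lt_of_lt_of_le hm0 hx.1
    have hd1 : 1 ≤ L + Real.log x := denom_ge hε hx.1
    have inner : HasDerivAt (fun x : ℝ => L + Real.log x) x⁻¹ x :=
      (Real.hasDerivAt_log (ne_of_gt hx0)).const_add L
    have outer := (Real.hasDerivAt_log (by linarith : L + Real.log x ≠ 0)).comp x inner
    have hfin := outer.const_mul L
    rw [show L / (x * (L + Real.log x)) = L * ((L + Real.log x)⁻¹ * x⁻¹) from by
      rw [div_eq_mul_inv, mul_inv, mul_comm x⁻¹]]
    exact hfin
  have hint : IntervalIntegrable (fun x => L / (x * (L + Real.log x))) volume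
      (ε * Real.exp 1) 1 := by
    apply ContinuousOn.intervalIntegrable
    rw [Set.uIcc_of_le hm1]
    intro x hx
    have hx0 : 0 < x := lt_of_lt_of_le hm0 hx.1
    have hd1 : 1 ≤ L + Real.log x := denom_ge hε hx.1
    apply ContinuousAt.continuousWithinAt
    apply ContinuousAt.div continuousAt_const
    · exact continuousAt_id.mul ((Real.continuousAt_log (ne_of_gt hx0)).const_add L)
    · nlinarith
  have key := intervalIntegral.integral_eq_sub_of_hasDerivAt hderiv hint
  rw [intervalIntegral.integral_of_le hm1] at key
  rw [key, Real.log_one, add_zero, logm hε, ← hL,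
    show L + (1 - L) = (1:ℝ) from by ring, Real.log_one, mul_zero, sub_zero]

noncomputable def Ffun (ε : ℝ) (x : ℝ) : ℝ :=
  Set.indicator (Set.Ioi (ε * Real.exp 1))
    (fun x => Real.log ε⁻¹ *
        (Real.exp (-x) - Set.indicator (Set.Ioc (ε * Real.exp 1) 1) (fun _ => 1) x) /
      (x * (Real.log ε⁻¹ + Real.log x))) x

lemma int_a {ε : ℝ} (hε : 0 < ε) (hε2 : ε < Real.exp (-2)) :
    IntegrableOn (fun x : ℝ => Real.log ε⁻¹ *
      (Real.exp (-x) / (x * (Real.log ε⁻¹ + Real.log x))))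
      (Set.Ioi (ε * Real.exp 1)) := by
  set L := Real.log ε⁻¹ with hL
  set m := ε * Real.exp 1 with hm
  have hm0 : 0 < m := by positivity
  have hLpos : 0 < L := by have := Lgt2 hε hε2; linarith
  have hbig : IntegrableOn (fun x : ℝ => (L/m) * Real.exp (-1*x)) (Set.Ioi m) :=
    (exp_neg_integrableOn_Ioi m one_pos).const_mul _
  refine MeasureTheory.Integrable.mono hbig ?_ ?_
  · apply ContinuousOn.aestronglyMeasurable ?_ measurableSet_Ioi
    intro x hx
    have hx0 : 0 < x := lt_trans hm0 hx
    have hd1 : 1 ≤ L + Real.log x := denom_ge hε (le_of_lt hx)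
    apply ContinuousAt.continuousWithinAt
    apply ContinuousAt.mul continuousAt_const
    apply ContinuousAt.div (by fun_prop)
    · exact continuousAt_id.mul ((Real.continuousAt_log (ne_of_gt hx0)).const_add L)
    · nlinarith
  · rw [ae_restrict_iff' measurableSet_Ioi]
    apply ae_of_all
    intro x hx
    have hx0 : 0 < x := lt_trans hm0 hx
    have hd1 : 1 ≤ L + Real.log x := denom_ge hε (le_of_lt hx)
    have hden : m ≤ x * (L + Real.log x) := by nlinarith [le_of_lt (show m < x from hx)]
    rw [Real.norm_eq_abs, Real.norm_eq_abs]
    rw [abs_of_nonneg (by positivity), abs_of_nonneg (by positivity : (0:ℝ) ≤ (L/m) * Real.exp (-1*x))]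
    rw [show (-1:ℝ)*x = -x from by ring]
    rw [div_mul_eq_mul_div, mul_div_assoc L]
    apply mul_le_mul_of_nonneg_left ?_ hLpos.le
    exact div_le_div_of_nonneg_left (Real.exp_pos _).le hm0 hden
lemma int_b {ε : ℝ} (hε : 0 < ε) (hε2 : ε < Real.exp (-2)) :
    IntegrableOn (fun x : ℝ => Real.log ε⁻¹ / (x * (Real.log ε⁻¹ + Real.log x)))
      (Set.Ioc (ε * Real.exp 1) 1) := by
  set L := Real.log ε⁻¹ with hL
  set m := ε * Real.exp 1 with hm
  have hm0 : 0 < m := by positivity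
  refine (ContinuousOn.integrableOn_Icc ?_).mono_set Set.Ioc_subset_Icc_self
  intro x hx
  have hx0 : 0 < x := lt_of_lt_of_le hm0 hx.1
  have hd1 : 1 ≤ L + Real.log x := denom_ge hε hx.1
  apply ContinuousAt.continuousWithinAt
  apply ContinuousAt.div continuousAt_const
  · exact continuousAt_id.mul ((Real.continuousAt_log (ne_of_gt hx0)).const_add L)
  · nlinarith

lemma step4 {ε : ℝ} (hε : 0 < ε) (hε2 : ε < Real.exp (-2)) :
    Real.log ε⁻¹ * (∫ x in Set.Ioi (ε * Real.exp 1),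
        Real.exp (-x) / (x * (Real.log ε⁻¹ + Real.log x)))
      - Real.log ε⁻¹ * Real.log (Real.log ε⁻¹)
      = ∫ x in Set.Ioi 0, Ffun ε x := by
  set L := Real.log ε⁻¹ with hL
  set m := ε * Real.exp 1 with hm
  have hm0 : 0 < m := by positivity
  -- replace L * log L by the Ioc integral
  rw [← step3 hε hε2, ← hL, ← hm]
  rw [← MeasureTheory.integral_const_mul]
  -- express Ioc-integral as integral of indicator over Ioi m
  have hrr : (volume.restrict (Set.Ioi m)).restrict (Set.Ioc m 1)
      = volume.restrict (Set.Ioc m 1) := by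
    rw [Measure.restrict_restrict measurableSet_Ioc,
      Set.inter_eq_self_of_subset_left Set.Ioc_subset_Ioi_self]
  have hindint : Integrable ((Set.Ioc m 1).indicator
      (fun x => L / (x * (L + Real.log x)))) (volume.restrict (Set.Ioi m)) :=
    ((int_b hε hε2).integrable_indicator measurableSet_Ioc).restrict
  rw [show (∫ x in Set.Ioc m 1, L / (x * (L + Real.log x)))
      = ∫ x in Set.Ioi m, (Set.Ioc m 1).indicator (fun x => L / (x * (L + Real.log x))) x from by
    rw [MeasureTheory.integral_indicator measurableSet_Ioc, hrr]]
  rw [← MeasureTheory.integral_sub (int_a hε hε2) hindint]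
  have hr2 : (volume.restrict (Set.Ioi (0:ℝ))).restrict (Set.Ioi m)
      = volume.restrict (Set.Ioi m) := by
    rw [Measure.restrict_restrict measurableSet_Ioi,
      Set.inter_eq_self_of_subset_left (Set.Ioi_subset_Ioi hm0.le)]
  have hrhs : (∫ x in Set.Ioi (0:ℝ), Ffun ε x)
      = ∫ x in Set.Ioi m, (L * (Real.exp (-x)
          - (Set.Ioc m 1).indicator (fun _ => 1) x) / (x * (L + Real.log x))) := by
    unfold Ffun
    rw [MeasureTheory.integral_indicator measurableSet_Ioi, hr2, ← hL, ← hm]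
  rw [hrhs]
  apply setIntegral_congr_fun measurableSet_Ioi
  intro x hx
  by_cases hx1 : x ∈ Set.Ioc m 1
  · simp only [Set.indicator_of_mem hx1]
    ring
  · simp only [Set.indicator_of_notMem hx1]
    ring


noncomputable def gbound (x : ℝ) : ℝ := 6 * x ^ (-(1/2):ℝ) * Real.exp (-(x/2))

lemma gbound_meas : Measurable gbound := by
  unfold gbound
  exact ((measurable_id.pow_const _).const_mul 6).mul (Real.measurable_exp.comp (by fun_prop))

lemma gbound_integrable : IntegrableOn gbound (Set.Ioi (0:ℝ)) := by
  rw [show Set.Ioi (0:ℝ) = Set.Ioc 0 1 ∪ Set.Ioi 1 from (Set.Ioc_union_Ioi_eq_Ioi zero_le_one).symm]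
  apply MeasureTheory.IntegrableOn.union
  · have hbig : IntegrableOn (fun x : ℝ => 6 * x ^ (-(1/2):ℝ)) (Set.Ioc (0:ℝ) 1) := by
      apply Integrable.const_mul
      exact (intervalIntegrable_iff_integrableOn_Ioc_of_le zero_le_one).mp
        (intervalIntegral.intervalIntegrable_rpow' (by norm_num))
    refine MeasureTheory.Integrable.mono hbig gbound_meas.aestronglyMeasurable.restrict ?_
    rw [ae_restrict_iff' measurableSet_Ioc]
    apply ae_of_all
    intro x hx
    have hx0 : 0 < x := hx.1
    rw [Real.norm_eq_abs, Real.norm_eq_abs, abs_of_nonneg (by unfold gbound; positivity),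
      abs_of_nonneg (by positivity)]
    unfold gbound
    nlinarith [Real.exp_le_one_iff.mpr (by linarith : -(x/2) ≤ 0),
      Real.rpow_pos_of_pos hx0 (-(1/2):ℝ), Real.exp_pos (-(x/2))]
  · have hbig : IntegrableOn (fun x : ℝ => 6 * Real.exp (-(1/2) * x)) (Set.Ioi (1:ℝ)) :=
      (exp_neg_integrableOn_Ioi 1 (by norm_num)).const_mul 6
    refine MeasureTheory.Integrable.mono hbig gbound_meas.aestronglyMeasurable.restrict ?_
    rw [ae_restrict_iff' measurableSet_Ioi]
    apply ae_of_all
    intro x hx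
    have hx1 : (1:ℝ) < x := hx
    have hx0 : (0:ℝ) < x := by linarith
    rw [Real.norm_eq_abs, Real.norm_eq_abs, abs_of_nonneg (by unfold gbound; positivity),
      abs_of_nonneg (by positivity)]
    unfold gbound
    have hr : x ^ (-(1/2):ℝ) ≤ 1 :=
      Real.rpow_le_one_of_one_le_of_nonpos hx1.le (by norm_num)
    have he : Real.exp (-(x/2)) = Real.exp (-(1/2)*x) := by ring_nf
    rw [he]
    nlinarith [Real.exp_pos (-(1/2)*x), Real.rpow_pos_of_pos hx0 (-(1/2):ℝ)]

lemma Ffun_meas (ε : ℝ) : Measurable (Ffun ε) := by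
  unfold Ffun
  apply Measurable.indicator ?_ measurableSet_Ioi
  apply Measurable.div
  · apply Measurable.const_mul
    apply Measurable.sub (by fun_prop)
    exact Measurable.indicator measurable_const measurableSet_Ioc
  · exact measurable_id.mul (Real.measurable_log.const_add _)

lemma exp_half_lt_two : Real.exp (1/2:ℝ) < 2 := by
  nlinarith [Real.exp_one_lt_d9, Real.exp_pos (1/2:ℝ),
    show Real.exp (1/2:ℝ) * Real.exp (1/2:ℝ) = Real.exp 1 from by
      rw [← Real.exp_add]; norm_num]

lemma Ffun_le {ε x : ℝ} (hε : 0 < ε) (hε2 : ε < Real.exp (-2)) (hx : 0 < x) :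
    ‖Ffun ε x‖ ≤ gbound x := by
  have hgpos : 0 ≤ gbound x := by unfold gbound; positivity
  by_cases hmem : x ∈ Set.Ioi (ε * Real.exp 1)
  swap
  · rw [Ffun, Set.indicator_of_notMem hmem, norm_zero]; exact hgpos
  rw [Ffun, Set.indicator_of_mem hmem]
  set L := Real.log ε⁻¹ with hL
  have hL2 : 2 < L := Lgt2 hε hε2
  have hm0 : 0 < ε * Real.exp 1 := by positivity
  have hxm : ε * Real.exp 1 < x := hmem
  have hd1 : 1 ≤ L + Real.log x := denom_ge hε hxm.le
  have hden : 0 < x * (L + Real.log x) := by nlinarith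
  have hy : (0:ℝ) < x ^ (-(1/2):ℝ) := Real.rpow_pos_of_pos hx _
  by_cases hx1 : x ≤ 1
  · -- small case
    have hind : Set.indicator (Set.Ioc (ε * Real.exp 1) 1) (fun _ => (1:ℝ)) x = 1 :=
      Set.indicator_of_mem (Set.mem_Ioc.mpr ⟨hxm, hx1⟩) _
    rw [hind]
    have hnum : Real.exp (-x) - 1 ≤ 0 := by
      have : Real.exp (-x) ≤ 1 := Real.exp_le_one_iff.mpr (by linarith)
      linarith
    rw [Real.norm_eq_abs, abs_div, abs_of_pos hden,
      abs_of_nonpos (by nlinarith : L * (Real.exp (-x) - 1) ≤ 0)]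
    have h1 : 1 - Real.exp (-x) ≤ x := by nlinarith [Real.add_one_le_exp (-x)]
    have hlogx : Real.log x ≤ 0 := Real.log_nonpos hx.le hx1
    -- step A : -(L * (exp(-x)-1)) / den ≤ L / (L + log x)
    have hA : -(L * (Real.exp (-x) - 1)) / (x * (L + Real.log x))
        ≤ L / (L + Real.log x) := by
      rw [div_le_div_iff₀ hden (by linarith)]
      have : -(L * (Real.exp (-x) - 1)) = L * (1 - Real.exp (-x)) := by ring
      rw [this]
      nlinarith [mul_le_mul_of_nonneg_left h1 (by nlinarith : (0:ℝ) ≤ L * (L + Real.log x))]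
    -- step B : L / (L + log x) ≤ 1 - log x
    have hB : L / (L + Real.log x) ≤ 1 - Real.log x := by
      rw [div_le_iff₀ (by linarith)]
      nlinarith
    -- step C : 1 - log x ≤ 3 * x^(-1/2)
    have hC : 1 - Real.log x ≤ 3 * x ^ (-(1/2):ℝ) := by
      have hy1 : (1:ℝ) ≤ x ^ (-(1/2):ℝ) :=
        Real.one_le_rpow_of_pos_of_le_one_of_nonpos hx hx1 (by norm_num)
      have hlogy : Real.log (x ^ (-(1/2):ℝ)) = -(1/2) * Real.log x := Real.log_rpow hx _
      have hle := Real.log_le_sub_one_of_pos hy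
      rw [hlogy] at hle
      linarith
    -- step D : 3 * x^(-1/2) ≤ gbound x
    have hD : 3 * x ^ (-(1/2):ℝ) ≤ gbound x := by
      unfold gbound
      have h2 : Real.exp (x/2) ≤ Real.exp (1/2:ℝ) := Real.exp_le_exp.2 (by linarith)
      have h3 : Real.exp (x/2) * Real.exp (-(x/2)) = 1 := by
        rw [← Real.exp_add]; norm_num
      nlinarith [exp_half_lt_two, Real.exp_pos (-(x/2)), Real.exp_pos (x/2), hy]
    exact le_trans hA (le_trans hB (le_trans hC hD))
  · push_neg at hx1
    have hind : Set.indicator (Set.Ioc (ε * Real.exp 1) 1) (fun _ => (1:ℝ)) x = 0 :=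
      Set.indicator_of_notMem (fun h => absurd h.2 (not_le.mpr hx1)) _
    rw [hind, sub_zero]
    have hlogx : 0 < Real.log x := Real.log_pos hx1
    rw [Real.norm_eq_abs, abs_of_pos (by positivity)]
    have bound1 : L * Real.exp (-x) / (x * (L + Real.log x)) ≤ Real.exp (-x) := by
      rw [div_le_iff₀ hden]
      have haux : L ≤ x * (L + Real.log x) := by
        nlinarith [mul_le_mul_of_nonneg_right hx1.le
          (by linarith : (0:ℝ) ≤ L + Real.log x)]
      nlinarith [mul_le_mul_of_nonneg_left haux (Real.exp_pos (-x)).le]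
    refine le_trans bound1 ?_
    unfold gbound
    set a := x ^ (-(1/2):ℝ) with ha'
    have hb : (0:ℝ) < x ^ ((1:ℝ)/2) := Real.rpow_pos_of_pos hx _
    have hab : a * x ^ ((1:ℝ)/2) = 1 := by
      rw [ha', ← Real.rpow_add hx]; norm_num
    have hc : (0:ℝ) < Real.exp (-(x/2)) := Real.exp_pos _
    have key : x * Real.exp (-x) ≤ 1 := by
      nlinarith [Real.add_one_le_exp x, Real.exp_pos (-x), Real.exp_pos x,
        show Real.exp x * Real.exp (-x) = 1 from by rw [← Real.exp_add]; norm_num]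
    have h12 : x ^ ((1:ℝ)/2) * Real.exp (-(x/2)) ≤ 1 := by
      have h0 : (x * Real.exp (-x)) ^ ((1:ℝ)/2) ≤ 1 :=
        Real.rpow_le_one (by positivity) key (by norm_num)
      rw [Real.mul_rpow hx.le (Real.exp_pos _).le] at h0
      have he2 : (Real.exp (-x)) ^ ((1:ℝ)/2) = Real.exp (-(x/2)) := by
        rw [Real.rpow_def_of_pos (Real.exp_pos _), Real.log_exp]
        congr 1; ring
      rwa [he2] at h0
    have hex : Real.exp (-x) = Real.exp (-(x/2)) * Real.exp (-(x/2)) := by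
      rw [← Real.exp_add]; congr 1; ring
    rw [hex]
    nlinarith [mul_le_mul_of_nonneg_left h12 (mul_pos hy hc).le, hab, hy, hc]

lemma Ltop : Tendsto (fun σ : ℝ => Real.log (σ - 1)⁻¹) (𝓝[>] (1:ℝ)) atTop := by
  apply Real.tendsto_log_atTop.comp
  apply tendsto_inv_nhdsGT_zero.comp
  have h1 : Tendsto (fun σ : ℝ => σ - 1) (𝓝[>] (1:ℝ)) (𝓝 0) := by
    have h := (continuous_sub_right (1:ℝ)).tendsto 1
    simp only [sub_self] at h
    exact h.mono_left nhdsWithin_le_nhds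
  rw [tendsto_nhdsWithin_iff]
  refine ⟨h1, ?_⟩
  filter_upwards [self_mem_nhdsWithin] with σ hσ
  simpa using (sub_pos.mpr (mem_Ioi.mp hσ))

lemma ratio_tendsto (b : ℝ) :
    Tendsto (fun y : ℝ => y / (y + b)) atTop (𝓝 1) := by
  have h1 : Tendsto (fun y : ℝ => 1 + b / y) atTop (𝓝 1) := by
    have := tendsto_const_nhds.div_atTop (f := fun _ : ℝ => b) (tendsto_id (α := ℝ))
    simpa using (tendsto_const_nhds (x := (1:ℝ))).add this
  have h2 : Tendsto (fun y : ℝ => (1 + b / y)⁻¹) atTop (𝓝 1) := by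
    simpa using h1.inv₀ (by norm_num)
  apply h2.congr'
  filter_upwards [eventually_gt_atTop (max 0 (-b))] with y hy
  have hy0 : 0 < y := lt_of_le_of_lt (le_max_left _ _) hy
  have hyb : 0 < y + b := by
    have := lt_of_le_of_lt (le_max_right _ _) hy; linarith
  field_simp

lemma Ffun_tendsto {x : ℝ} (hx : 0 < x) :
    Tendsto (fun σ : ℝ => Ffun (σ - 1) x) (𝓝[>] (1:ℝ))
      (𝓝 ((Real.exp (-x) - Set.indicator (Set.Ioc (0:ℝ) 1) (fun _ => 1) x) / x)) := by
  set c := Set.indicator (Set.Ioc (0:ℝ) 1) (fun _ => (1:ℝ)) x with hc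
  have hmain : Tendsto (fun σ : ℝ =>
      (Real.log (σ-1)⁻¹ / (Real.log (σ-1)⁻¹ + Real.log x)) * ((Real.exp (-x) - c) / x))
      (𝓝[>] (1:ℝ)) (𝓝 ((Real.exp (-x) - c) / x)) := by
    have := ((ratio_tendsto (Real.log x)).comp Ltop).mul
      (tendsto_const_nhds (x := (Real.exp (-x) - c) / x))
    simpa using this
  apply hmain.congr'
  -- eventually equal
  have hev1 : ∀ᶠ σ : ℝ in 𝓝[>] (1:ℝ), (σ-1) * Real.exp 1 < min x 1 := by
    have hcont : Tendsto (fun σ : ℝ => (σ-1) * Real.exp 1) (𝓝[>] (1:ℝ)) (𝓝 0) := by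
      have h : Tendsto (fun σ : ℝ => (σ-1) * Real.exp 1) (𝓝 1) (𝓝 ((1-1) * Real.exp 1)) :=
        ((continuous_sub_right (1:ℝ)).mul (continuous_const (y := Real.exp 1))).tendsto 1
      simp only [sub_self, zero_mul] at h
      exact h.mono_left nhdsWithin_le_nhds
    exact hcont.eventually_lt_const (by positivity)
  have hev2 : ∀ᶠ σ : ℝ in 𝓝[>] (1:ℝ), 0 < Real.log (σ-1)⁻¹ + Real.log x :=
    (Ltop.eventually_gt_atTop (-Real.log x)).mono (fun σ h => by linarith)
  have hev3 : ∀ᶠ σ : ℝ in 𝓝[>] (1:ℝ), (1:ℝ) < σ := self_mem_nhdsWithin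
  filter_upwards [hev1, hev2, hev3] with σ h1 h2 h3
  have hε : 0 < σ - 1 := sub_pos.mpr h3
  have hmx : (σ-1) * Real.exp 1 < x := lt_of_lt_of_le h1 (min_le_left _ _)
  have hm1 : (σ-1) * Real.exp 1 < 1 := lt_of_lt_of_le h1 (min_le_right _ _)
  have hmem : x ∈ Set.Ioi ((σ-1) * Real.exp 1) := hmx
  have hindeq : Set.indicator (Set.Ioc ((σ-1) * Real.exp 1) 1) (fun _ => (1:ℝ)) x = c := by
    rw [hc]
    by_cases hx1 : x ≤ 1
    · rw [Set.indicator_of_mem (Set.mem_Ioc.mpr ⟨hmx, hx1⟩),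
        Set.indicator_of_mem (Set.mem_Ioc.mpr ⟨hx, hx1⟩)]
    · rw [Set.indicator_of_notMem (fun h => absurd h.2 hx1),
        Set.indicator_of_notMem (fun h => absurd h.2 hx1)]
  rw [show Ffun (σ-1) x = Real.log (σ-1)⁻¹ *
      (Real.exp (-x) - Set.indicator (Set.Ioc ((σ-1) * Real.exp 1) 1) (fun _ => 1) x) /
      (x * (Real.log (σ-1)⁻¹ + Real.log x)) from Set.indicator_of_mem hmem _]
  rw [hindeq]
  field_simp

noncomputable def climit : ℝ :=
  ∫ x in Set.Ioi (0:ℝ), (Real.exp (-x) - Set.indicator (Set.Ioc (0:ℝ) 1) (fun _ => 1) x) / x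

lemma dct : Tendsto (fun σ : ℝ => ∫ x in Set.Ioi (0:ℝ), Ffun (σ - 1) x)
    (𝓝[>] (1:ℝ)) (𝓝 climit) := by
  apply MeasureTheory.tendsto_integral_filter_of_dominated_convergence gbound
  · exact Eventually.of_forall (fun σ => (Ffun_meas (σ-1)).aestronglyMeasurable.restrict)
  · have hev : ∀ᶠ σ : ℝ in 𝓝[>] (1:ℝ), σ ∈ Set.Ioo (1:ℝ) (1 + Real.exp (-2)) :=
      Ioo_mem_nhdsGT_of_mem ⟨le_refl 1, by nlinarith [Real.exp_pos (-2:ℝ)]⟩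
    filter_upwards [hev] with σ hσ
    rw [ae_restrict_iff' measurableSet_Ioi]
    apply ae_of_all
    intro x hx
    exact Ffun_le (by linarith [hσ.1] : 0 < σ - 1) (by linarith [hσ.2] : σ - 1 < Real.exp (-2)) hx
  · exact gbound_integrable
  · rw [ae_restrict_iff' measurableSet_Ioi]
    exact ae_of_all _ (fun x hx => Ffun_tendsto hx)

/-- there are constants `c₁, c₂` such that, as `σ → 1⁺`,
`∫_{e^e}^∞ u^{-σ}/(log u · log log u) du
  = log log(1/(σ-1)) + c₁ + c₂/log(1/(σ-1)) + o(1/log(1/(σ-1)))`. -/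
theorem statement8 :
    ∃ c₁ c₂ : ℝ,
      (fun σ : ℝ =>
          (∫ u in Set.Ici (Real.exp (Real.exp 1)),
              u ^ (-σ) / (Real.log u * Real.log (Real.log u))) -
            (Real.log (Real.log (1 / (σ - 1))) + c₁ + c₂ / Real.log (1 / (σ - 1))))
        =o[𝓝[>] (1 : ℝ)] fun σ : ℝ => 1 / Real.log (1 / (σ - 1)) := by
  refine ⟨0, climit, ?_⟩
  have hev : ∀ᶠ σ : ℝ in 𝓝[>] (1:ℝ), σ ∈ Set.Ioo (1:ℝ) (1 + Real.exp (-2)) :=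
    Ioo_mem_nhdsGT_of_mem ⟨le_refl 1, by nlinarith [Real.exp_pos (-2:ℝ)]⟩
  have hevL : ∀ᶠ σ : ℝ in 𝓝[>] (1:ℝ), 2 < Real.log (1/(σ-1)) := by
    filter_upwards [hev] with σ hσ
    rw [one_div]
    exact Lgt2 (by linarith [hσ.1]) (by linarith [hσ.2])
  rw [Asymptotics.isLittleO_iff_tendsto']
  swap
  · filter_upwards [hevL] with σ hL h0
    exact absurd h0 (by positivity)
  have hkey : Tendsto (fun σ : ℝ => (∫ x in Set.Ioi (0:ℝ), Ffun (σ-1) x) - climit)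
      (𝓝[>] (1:ℝ)) (𝓝 0) := by
    simpa using dct.sub_const climit
  apply hkey.congr'
  filter_upwards [hev, hevL] with σ hσ hL2
  have hε : 0 < σ - 1 := by linarith [hσ.1]
  have hε2 : σ - 1 < Real.exp (-2) := by linarith [hσ.2]
  have hI : (∫ u in Set.Ici (Real.exp (Real.exp 1)),
      u ^ (-σ) / (Real.log u * Real.log (Real.log u)))
      = ∫ x in Set.Ioi ((σ-1) * Real.exp 1),
          Real.exp (-x) / (x * (Real.log (σ-1)⁻¹ + Real.log x)) := by
    rw [step1_s8 hσ.1, show (fun t : ℝ => Real.exp (-((σ-1)*t)) / (t * Real.log t))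
      = fun t : ℝ => Real.exp (-((σ-1)*t)) / (t * Real.log t) from rfl]
    exact step2 hε
  have h4 := step4 hε hε2
  have hLne : Real.log (σ-1)⁻¹ ≠ 0 := by rw [one_div] at hL2; linarith
  simp only [one_div, add_zero]
  rw [div_inv_eq_mul, hI, ← h4]
  field_simp
  ring
end

section
/- Let A be the measure on ℝ with Lebesgue density χ_{[e^e,∞)}(u)/(log u · log log u). Then there exist real constants b₁ > 0 and b₂ such that ∑_{n=0}^∞ (1/n!) ∫_{[1,∞)} u^{−σ} d(A^{*n})(u) = b₁·log(1/(σ−1)) + b₂ + o(1) as σ → 1⁺. -/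
open MeasureTheory Filter Topology Asymptotics
open scoped ENNReal

/-- The measure with Lebesgue density `χ_{[e^e,∞)}(u)/(log u · log log u)`. -/
noncomputable def measA : Measure ℝ :=
  MeasureTheory.volume.withDensity (fun u : ℝ => ENNReal.ofReal
    (if Real.exp (Real.exp 1) ≤ u then (Real.log u * Real.log (Real.log u))⁻¹ else 0))

section Aux
open Set
noncomputable def mel (μ : Measure ℝ) (σ : ℝ) : ℝ≥0∞ :=
  ∫⁻ u in Set.Ici (1:ℝ), ENNReal.ofReal (u ^ (-σ)) ∂μ

instance : SFinite measA := by unfold measA; infer_instance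

lemma sfinite_mpow (μ : Measure ℝ) [SFinite μ] (n : ℕ) : SFinite (mpow μ n) := by
  induction n with
  | zero => exact inferInstanceAs (SFinite (Measure.dirac 1))
  | succ n ih => exact inferInstanceAs (SFinite ((((mpow μ n).prod μ)).map _))

instance (n : ℕ) : SFinite (mpow measA n) := sfinite_mpow _ n

lemma mconv_null (μ ν : Measure ℝ) [SFinite ν] (hμ : μ (Set.Iio 1) = 0)
    (hν : ν (Set.Iio 1) = 0) : mconv μ ν (Set.Iio 1) = 0 := by
  rw [mconv, Measure.map_apply (by fun_prop) measurableSet_Iio]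
  refine measure_mono_null (t := (Set.Iio 1 ×ˢ Set.univ) ∪ (Set.univ ×ˢ Set.Iio 1)) ?_ ?_
  · intro p hp
    simp only [Set.mem_preimage, Set.mem_Iio] at hp
    by_contra h
    simp only [Set.mem_union, Set.mem_prod, Set.mem_univ, Set.mem_Iio, and_true, true_and,
      not_or, not_lt] at h
    nlinarith [h.1, h.2]
  · refine measure_union_null ?_ ?_ <;> rw [Measure.prod_prod] <;> simp [hμ, hν]

lemma ae_mem_Ici (μ : Measure ℝ) (hμ : μ (Set.Iio 1) = 0) : ∀ᵐ x ∂μ, x ∈ Set.Ici (1:ℝ) := by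
  rw [ae_iff]
  convert hμ using 2
  ext x; simp

lemma mel_eq_lintegral (μ : Measure ℝ) (hμ : μ (Set.Iio 1) = 0) (σ : ℝ) :
    mel μ σ = ∫⁻ u, ENNReal.ofReal (u ^ (-σ)) ∂μ := by
  rw [mel, Measure.restrict_eq_self_of_ae_mem (ae_mem_Ici μ hμ)]

lemma mel_mconv (μ ν : Measure ℝ) [SFinite μ] [SFinite ν] (hμ : μ (Set.Iio 1) = 0)
    (hν : ν (Set.Iio 1) = 0) (σ : ℝ) :
    mel (mconv μ ν) σ = mel μ σ * mel ν σ := by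
  have hm : Measurable (fun u : ℝ => ENNReal.ofReal (u ^ (-σ))) := by fun_prop
  rw [mel_eq_lintegral _ (mconv_null μ ν hμ hν), mel_eq_lintegral _ hμ, mel_eq_lintegral _ hν,
    mconv, lintegral_map' hm.aemeasurable (by fun_prop)]
  rw [lintegral_prod _ (by fun_prop)]
  have haeμ := ae_mem_Ici μ hμ
  have haeν := ae_mem_Ici ν hν
  rw [lintegral_congr_ae (g := fun x => ENNReal.ofReal (x ^ (-σ)) * ∫⁻ v, ENNReal.ofReal (v ^ (-σ)) ∂ν) ?_]
  · exact lintegral_mul_const'' _ hm.aemeasurable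
  · filter_upwards [haeμ] with x hx
    have hx0 : (0:ℝ) ≤ x := le_trans zero_le_one hx
    rw [← lintegral_const_mul'' _ hm.aemeasurable]
    refine lintegral_congr_ae ?_
    filter_upwards [haeν] with y hy
    have hy0 : (0:ℝ) ≤ y := le_trans zero_le_one hy
    rw [Real.mul_rpow hx0 hy0, ENNReal.ofReal_mul (Real.rpow_nonneg hx0 _)]

lemma measA_null : measA (Set.Iio 1) = 0 := by
  rw [measA, withDensity_apply _ measurableSet_Iio]
  rw [setLIntegral_congr_fun measurableSet_Iio (fun x hx => ?_), lintegral_zero]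
  have h1 : (1:ℝ) < Real.exp (Real.exp 1) := by
    have h2 := Real.add_one_le_exp (1:ℝ)
    calc (1:ℝ) < Real.exp 1 := by linarith
    _ ≤ Real.exp (Real.exp 1) := Real.exp_le_exp.2 (by linarith)
  rw [if_neg (by simp only [Set.mem_Iio] at hx; linarith)]
  simp

lemma mpow_null (n : ℕ) : (mpow measA n) (Set.Iio 1) = 0 := by
  induction n with
  | zero =>
    simp only [mpow]
    rw [Measure.dirac_apply' _ measurableSet_Iio]
    simp
  | succ n ih => exact mconv_null _ _ ih measA_null

lemma mel_mpow (n : ℕ) (σ : ℝ) : mel (mpow measA n) σ = (mel measA σ) ^ n := by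
  induction n with
  | zero =>
    simp only [mpow, pow_zero, mel]
    rw [Measure.restrict_eq_self_of_ae_mem (ae_mem_Ici _ (by rw [Measure.dirac_apply' _ measurableSet_Iio]; simp))]
    rw [lintegral_dirac]
    simp [Real.one_rpow]
  | succ n ih =>
    rw [mpow, mel_mconv _ _ (mpow_null n) measA_null, ih, pow_succ]


noncomputable def cc : ℝ := Real.exp (Real.exp 1)

noncomputable def gker (σ : ℝ) (u : ℝ) : ℝ := (Real.log u * Real.log (Real.log u))⁻¹ * u ^ (-σ)

lemma gker_meas (σ : ℝ) : Measurable (gker σ) :=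
  ((Real.measurable_log.mul (Real.measurable_log.comp Real.measurable_log)).inv).mul
    (measurable_id.pow_const _)

lemma cc_pos : (0:ℝ) < cc := Real.exp_pos _
lemma one_lt_cc : (1:ℝ) < cc := by
  have h2 := Real.add_one_le_exp (1:ℝ)
  calc (1:ℝ) < Real.exp 1 := by linarith
  _ ≤ cc := Real.exp_le_exp.2 (by linarith)

lemma denom_ge_one {u : ℝ} (hu : cc ≤ u) : 1 ≤ Real.log u * Real.log (Real.log u) := by
  have h1 : Real.exp 1 ≤ Real.log u := by
    rw [← Real.log_exp (Real.exp 1)]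
    exact Real.log_le_log (Real.exp_pos _) hu
  have he : (1:ℝ) ≤ Real.exp 1 := by have := Real.add_one_le_exp (1:ℝ); linarith
  have h2 : 1 ≤ Real.log (Real.log u) := by
    rw [← Real.log_exp 1]
    exact Real.log_le_log (Real.exp_pos _) h1
  nlinarith

lemma gker_nonneg {σ : ℝ} {u : ℝ} (hu : cc ≤ u) : 0 ≤ gker σ u := by
  have h := denom_ge_one hu
  have hu0 : (0:ℝ) < u := lt_of_lt_of_le cc_pos hu
  exact mul_nonneg (inv_nonneg.2 (by linarith)) (Real.rpow_nonneg hu0.le _)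

lemma gker_le {σ : ℝ} {u : ℝ} (hu : cc ≤ u) : gker σ u ≤ u ^ (-σ) := by
  have h := denom_ge_one hu
  have hu0 : (0:ℝ) < u := lt_of_lt_of_le cc_pos hu
  have : (Real.log u * Real.log (Real.log u))⁻¹ ≤ 1 := by
    rw [inv_le_one_iff₀]; right; linarith
  exact mul_le_of_le_one_left (Real.rpow_nonneg hu0.le _) this

lemma gker_integrable {σ : ℝ} (hσ : 1 < σ) : IntegrableOn (gker σ) (Ioi cc) := by
  refine Integrable.mono (integrableOn_Ioi_rpow_of_lt (show -σ < -1 by linarith) cc_pos) ?_ ?_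
  · exact (gker_meas σ).aestronglyMeasurable
  · filter_upwards [ae_restrict_mem measurableSet_Ioi] with u hu
    have hu' : cc ≤ u := le_of_lt hu
    rw [Real.norm_eq_abs, Real.norm_eq_abs, abs_of_nonneg (gker_nonneg hu'),
      abs_of_nonneg (Real.rpow_nonneg (lt_of_lt_of_le cc_pos hu').le _)]
    exact gker_le hu'

noncomputable def aInt (σ : ℝ) : ℝ := ∫ u in Ioi cc, gker σ u

lemma aInt_nonneg (σ : ℝ) : 0 ≤ aInt σ := by
  refine setIntegral_nonneg measurableSet_Ioi (fun u hu => gker_nonneg (le_of_lt hu))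



lemma dens_meas : Measurable (fun u : ℝ => ENNReal.ofReal
    (if Real.exp (Real.exp 1) ≤ u then (Real.log u * Real.log (Real.log u))⁻¹ else 0)) := by
  refine Measurable.ennreal_ofReal ?_
  exact Measurable.ite measurableSet_Ici ((Real.measurable_log.mul (Real.measurable_log.comp Real.measurable_log)).inv) measurable_const

lemma melA_eq {σ : ℝ} (hσ : 1 < σ) : mel measA σ = ENNReal.ofReal (aInt σ) := by
  rw [mel, measA, restrict_withDensity measurableSet_Ici,
    lintegral_withDensity_eq_lintegral_mul _ dens_meas (by fun_prop)]
  simp only [Pi.mul_apply]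
  have key : ∀ u : ℝ, u ∈ Set.Ici (1:ℝ) →
      (ENNReal.ofReal (if Real.exp (Real.exp 1) ≤ u then (Real.log u * Real.log (Real.log u))⁻¹ else 0)
        * ENNReal.ofReal (u ^ (-σ)))
      = (Set.Ici cc).indicator (fun u => ENNReal.ofReal (gker σ u)) u := by
    intro u _
    rcases le_or_gt cc u with h | h
    · rw [Set.indicator_of_mem (show u ∈ Set.Ici cc from h), if_pos (show Real.exp (Real.exp 1) ≤ u from h), gker, ENNReal.ofReal_mul]
      have := denom_ge_one h
      exact inv_nonneg.2 (by linarith)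
    · rw [Set.indicator_of_notMem (by simpa using h), if_neg (show ¬ Real.exp (Real.exp 1) ≤ u by simpa [cc] using h)]
      simp
  rw [setLIntegral_congr_fun measurableSet_Ici key,
    lintegral_indicator measurableSet_Ici _, Measure.restrict_restrict measurableSet_Ici,
    Set.inter_eq_self_of_subset_left (Set.Ici_subset_Ici.2 one_lt_cc.le)]
  rw [setLIntegral_congr Ioi_ae_eq_Ici.symm]
  rw [← ofReal_integral_eq_lintegral_ofReal (gker_integrable hσ)]
  · rfl
  · filter_upwards [ae_restrict_mem measurableSet_Ioi] with u hu
    exact gker_nonneg (le_of_lt hu)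


noncomputable def hker (ε : ℝ) (t : ℝ) : ℝ := Real.exp (-(ε*t)) * (t * Real.log t)⁻¹
noncomputable def kker (ε : ℝ) (w : ℝ) : ℝ :=
  Real.exp (-w) * (w * (Real.log w + Real.log (1/ε)))⁻¹

lemma image_exp_Ioi (a : ℝ) : Real.exp '' Ioi a = Ioi (Real.exp a) := by
  ext x
  constructor
  · rintro ⟨t, ht, rfl⟩
    exact Real.exp_lt_exp.2 ht
  · intro hx
    have hx0 : (0:ℝ) < x := lt_trans (Real.exp_pos a) hx
    exact ⟨Real.log x, by
      rw [mem_Ioi, ← Real.log_exp a]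
      exact Real.log_lt_log (Real.exp_pos a) hx, Real.exp_log hx0⟩

lemma image_div_Ioi {ε : ℝ} (hε : 0 < ε) (a : ℝ) :
    (fun w => w / ε) '' Ioi (ε * a) = Ioi a := by
  ext x
  constructor
  · rintro ⟨w, hw, rfl⟩
    rw [mem_Ioi] at hw ⊢
    rw [lt_div_iff₀ hε]
    linarith [hw]
  · intro hx
    exact ⟨ε * x, by rw [mem_Ioi]; exact (mul_lt_mul_iff_right₀ hε).2 hx, by field_simp⟩

lemma sub1 {ε : ℝ} (hε : 0 < ε) :
    aInt (1+ε) = ∫ t in Ioi (Real.exp 1), hker ε t := by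
  rw [aInt, show cc = Real.exp (Real.exp 1) from rfl, ← image_exp_Ioi,
    integral_image_eq_integral_abs_deriv_smul measurableSet_Ioi
      (fun x _ => (Real.hasDerivAt_exp x).hasDerivWithinAt) Real.exp_injective.injOn]
  refine setIntegral_congr_fun measurableSet_Ioi (fun t ht => ?_)
  have ht0 : (0:ℝ) < t := lt_trans (Real.exp_pos 1) ht
  rw [smul_eq_mul, abs_of_pos (Real.exp_pos t), gker, Real.log_exp,
    Real.rpow_def_of_pos (Real.exp_pos t), Real.log_exp, hker,
    show Real.exp t * ((t * Real.log t)⁻¹ * Real.exp (t * -(1+ε)))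
      = (Real.exp t * Real.exp (t * -(1+ε))) * (t * Real.log t)⁻¹ by ring,
    ← Real.exp_add, show t + t * -(1+ε) = -(ε*t) by ring]

lemma sub2 {ε : ℝ} (hε : 0 < ε) :
    ∫ t in Ioi (Real.exp 1), hker ε t = ∫ w in Ioi (ε * Real.exp 1), kker ε w := by
  have hd : ∀ x ∈ Ioi (ε * Real.exp 1), HasDerivWithinAt (fun w : ℝ => w / ε)
      ((fun _ : ℝ => 1/ε) x) (Ioi (ε * Real.exp 1)) x :=
    fun x _ => ((hasDerivAt_id x).div_const ε).hasDerivWithinAt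
  rw [← image_div_Ioi hε (Real.exp 1),
    integral_image_eq_integral_abs_deriv_smul measurableSet_Ioi hd
      (fun x _ y _ h => by field_simp at h; exact h)]
  refine setIntegral_congr_fun measurableSet_Ioi (fun w hw => ?_)
  have hw0 : (0:ℝ) < w := lt_trans (by positivity) hw
  rw [smul_eq_mul, hker, kker, Real.log_div (ne_of_gt hw0) (ne_of_gt hε), one_div,
    Real.log_inv]
  have h1 : -(ε * (w / ε)) = -w := by field_simp
  rw [h1]
  rw [abs_of_pos (by positivity : (0:ℝ) < ε⁻¹),
    show Real.log w + -Real.log ε = Real.log w - Real.log ε by ring]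
  rcases eq_or_ne (Real.log w - Real.log ε) 0 with h0 | h0
  · rw [h0]; simp
  · field_simp


noncomputable def LL (ε : ℝ) : ℝ := Real.log (1/ε)
noncomputable def bker (ε : ℝ) (w : ℝ) : ℝ := (w * (Real.log w + Real.log (1/ε)))⁻¹
noncomputable def rker (ε : ℝ) (w : ℝ) : ℝ :=
  (Real.exp (-w) - 1) * (w * (Real.log w + Real.log (1/ε)))⁻¹

lemma LL_eq (ε : ℝ) : LL ε = - Real.log ε := by rw [LL, one_div, Real.log_inv]

-- denominator bound
lemma denom_ge_s16 {ε w : ℝ} (hε : 0 < ε) (hw : ε * Real.exp 1 ≤ w) :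
    1 ≤ Real.log w + LL ε := by
  have h0 : (0:ℝ) < ε * Real.exp 1 := by positivity
  have h1 : Real.log (ε * Real.exp 1) ≤ Real.log w := Real.log_le_log h0 hw
  rw [Real.log_mul (ne_of_gt hε) (Real.exp_ne_zero 1), Real.log_exp] at h1
  rw [LL_eq]
  linarith

lemma kker_meas (ε : ℝ) : Measurable (kker ε) :=
  ((Real.measurable_exp.comp measurable_neg)).mul
    ((measurable_id.mul (Real.measurable_log.add measurable_const)).inv)

lemma rker_meas (ε : ℝ) : Measurable (rker ε) :=
  (((Real.measurable_exp.comp measurable_neg)).sub measurable_const).mul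
    ((measurable_id.mul (Real.measurable_log.add measurable_const)).inv)

-- continuity on Icc (ε e) 1
lemma bker_contOn {ε : ℝ} (hε : 0 < ε) :
    ContinuousOn (bker ε) (Icc (ε * Real.exp 1) 1) := by
  refine ContinuousOn.inv₀ ?_ ?_
  · exact continuousOn_id.mul ((Real.continuousOn_log.mono (fun x hx => by
      simp only [Set.mem_compl_iff, Set.mem_singleton_iff]
      have : (0:ℝ) < ε * Real.exp 1 := by positivity
      exact ne_of_gt (lt_of_lt_of_le this hx.1))).add continuousOn_const)
  · intro x hx
    have hx0 : (0:ℝ) < x := lt_of_lt_of_le (by positivity) hx.1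
    have hd : 1 ≤ Real.log x + LL ε := denom_ge_s16 hε hx.1
    rw [LL] at hd
    positivity

lemma kker_contOn {ε : ℝ} (hε : 0 < ε) :
    ContinuousOn (kker ε) (Icc (ε * Real.exp 1) 1) := by
  unfold kker
  exact ((Real.continuous_exp.comp continuous_neg).continuousOn).mul (bker_contOn hε)

lemma rker_contOn {ε : ℝ} (hε : 0 < ε) :
    ContinuousOn (rker ε) (Icc (ε * Real.exp 1) 1) := by
  unfold rker
  exact (((Real.continuous_exp.comp continuous_neg).continuousOn).sub continuousOn_const).mul
    (bker_contOn hε)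

lemma kker_int_Ioc {ε : ℝ} (hε : 0 < ε) : IntegrableOn (kker ε) (Ioc (ε * Real.exp 1) 1) :=
  ((kker_contOn hε).integrableOn_Icc).mono_set Ioc_subset_Icc_self

lemma rker_int_Ioc {ε : ℝ} (hε : 0 < ε) : IntegrableOn (rker ε) (Ioc (ε * Real.exp 1) 1) :=
  ((rker_contOn hε).integrableOn_Icc).mono_set Ioc_subset_Icc_self

lemma bker_int_Ioc {ε : ℝ} (hε : 0 < ε) : IntegrableOn (bker ε) (Ioc (ε * Real.exp 1) 1) :=
  ((bker_contOn hε).integrableOn_Icc).mono_set Ioc_subset_Icc_self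

lemma kker_int_Ioi {ε : ℝ} (hε : 0 < ε) (hε1 : ε * Real.exp 1 ≤ 1) :
    IntegrableOn (kker ε) (Ioi (1:ℝ)) := by
  refine Integrable.mono (g := fun w => Real.exp (-1 * w))
    (by simpa [IntegrableOn] using exp_neg_integrableOn_Ioi 1 one_pos) ((kker_meas ε).aestronglyMeasurable) ?_
  filter_upwards [ae_restrict_mem measurableSet_Ioi] with w hw
  rw [Set.mem_Ioi] at hw
  have hw0 : (0:ℝ) < w := by linarith
  have hlw : 0 ≤ Real.log w := Real.log_nonneg hw.le
  have hd : (1:ℝ) ≤ w * (Real.log w + Real.log (1/ε)) := by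
    have h1 : (1:ℝ) ≤ Real.log w + LL ε := denom_ge_s16 hε (le_trans hε1 hw.le)
    rw [LL] at h1
    nlinarith
  rw [Real.norm_eq_abs, Real.norm_eq_abs, kker, neg_one_mul, abs_of_nonneg
    (by positivity : (0:ℝ) ≤ Real.exp (-w) * (w * (Real.log w + Real.log (1/ε)))⁻¹),
    abs_of_nonneg (Real.exp_pos _).le]
  calc Real.exp (-w) * (w * (Real.log w + Real.log (1/ε)))⁻¹
      ≤ Real.exp (-w) * 1 := by
        refine mul_le_mul_of_nonneg_left ?_ (Real.exp_pos _).le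
        rw [inv_le_one_iff₀]; right; exact hd
    _ = Real.exp (-w) := mul_one _

-- split
lemma kker_split {ε : ℝ} (hε : 0 < ε) (hε1 : ε * Real.exp 1 ≤ 1) :
    ∫ w in Ioi (ε * Real.exp 1), kker ε w
      = (∫ w in Ioc (ε * Real.exp 1) 1, kker ε w) + ∫ w in Ioi (1:ℝ), kker ε w := by
  rw [← Ioc_union_Ioi_eq_Ioi hε1]
  exact setIntegral_union (Ioc_disjoint_Ioi le_rfl) measurableSet_Ioi
    (kker_int_Ioc hε) (kker_int_Ioi hε hε1)

-- pointwise decomposition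
lemma kker_decomp (ε w : ℝ) : kker ε w = bker ε w + rker ε w := by
  rw [kker, bker, rker]; ring

lemma Ioc_split {ε : ℝ} (hε : 0 < ε) :
    ∫ w in Ioc (ε * Real.exp 1) 1, kker ε w
      = (∫ w in Ioc (ε * Real.exp 1) 1, bker ε w) + ∫ w in Ioc (ε * Real.exp 1) 1, rker ε w := by
  rw [← integral_add (bker_int_Ioc hε) (rker_int_Ioc hε)]
  exact setIntegral_congr_fun measurableSet_Ioc (fun w _ => kker_decomp ε w)

-- exact evaluation of the base part
lemma base_eval {ε : ℝ} (hε : 0 < ε) (hε1 : ε * Real.exp 1 ≤ 1) :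
    ∫ w in Ioc (ε * Real.exp 1) 1, bker ε w = Real.log (LL ε) := by
  rw [← intervalIntegral.integral_of_le hε1]
  have key : ∀ x ∈ uIcc (ε * Real.exp 1) 1,
      HasDerivAt (fun w => Real.log (Real.log w + Real.log (1/ε))) (bker ε x) x := by
    intro x hx
    rw [uIcc_of_le hε1] at hx
    have hx0 : (0:ℝ) < x := lt_of_lt_of_le (by positivity) hx.1
    have hd : (1:ℝ) ≤ Real.log x + Real.log (1/ε) := by
      have := denom_ge_s16 hε hx.1; rwa [LL] at this
    have h1 : HasDerivAt (fun w : ℝ => Real.log w + Real.log (1/ε)) x⁻¹ x :=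
      (Real.hasDerivAt_log (ne_of_gt hx0)).add_const _
    have h2 := h1.log (by linarith : Real.log x + Real.log (1/ε) ≠ 0)
    convert h2 using 1
    rw [bker, mul_inv]
    exact (div_eq_mul_inv _ _).symm
  rw [intervalIntegral.integral_eq_sub_of_hasDerivAt key
    (((bker_contOn hε).mono (by rw [uIcc_of_le hε1])).intervalIntegrable)]
  have hlow : Real.log (ε * Real.exp 1) + Real.log (1/ε) = 1 := by
    rw [Real.log_mul (ne_of_gt hε) (Real.exp_ne_zero 1), Real.log_exp, one_div, Real.log_inv]
    ring
  rw [hlow, Real.log_one, zero_add, sub_zero, LL]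



lemma LL_tendsto : Tendsto LL (𝓝[>] (0:ℝ)) atTop := by
  have h1 : Tendsto (fun ε : ℝ => ε⁻¹) (𝓝[>] (0:ℝ)) atTop := tendsto_inv_nhdsGT_zero
  refine (Real.tendsto_log_atTop.comp h1).congr (fun ε => ?_)
  simp [LL, one_div]

lemma ratio_tendsto_s16 (c : ℝ) :
    Tendsto (fun ε => LL ε * (c + LL ε)⁻¹) (𝓝[>] (0:ℝ)) (𝓝 1) := by
  have h2 : Tendsto (fun ε => c + LL ε) (𝓝[>] (0:ℝ)) atTop :=
    tendsto_atTop_add_const_left _ c LL_tendsto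
  have h3 : Tendsto (fun ε => c * (c + LL ε)⁻¹) (𝓝[>] (0:ℝ)) (𝓝 0) := by
    have := h2.inv_tendsto_atTop
    simpa using this.const_mul c
  have h4 : Tendsto (fun ε => 1 - c * (c + LL ε)⁻¹) (𝓝[>] (0:ℝ)) (𝓝 1) := by
    simpa using (tendsto_const_nhds (x := (1:ℝ)) (f := 𝓝[>] (0:ℝ))).sub h3
  refine Tendsto.congr' ?_ h4
  filter_upwards [h2.eventually_gt_atTop 0] with ε hd
  field_simp; ring

lemma abs_exp_sub_one_le {w : ℝ} (hw : 0 ≤ w) : |Real.exp (-w) - 1| ≤ w := by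
  have h1 : Real.exp (-w) ≤ 1 := Real.exp_le_one_iff.2 (by linarith)
  have h2 := Real.add_one_le_exp (-w)
  rw [abs_of_nonpos (by linarith)]
  linarith

lemma neg_log_le {w : ℝ} (hw : 0 < w) : -Real.log w ≤ 2 * (Real.sqrt w)⁻¹ := by
  have hs : 0 < Real.sqrt w := Real.sqrt_pos.2 hw
  have h1 : Real.log (Real.sqrt w) = Real.log w / 2 := Real.log_sqrt hw.le
  have h2 : -Real.log (Real.sqrt w) ≤ (Real.sqrt w)⁻¹ - 1 := by
    have := Real.log_le_sub_one_of_pos (inv_pos.2 hs)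
    rwa [Real.log_inv] at this
  have hinv : (0:ℝ) < (Real.sqrt w)⁻¹ := inv_pos.2 hs
  nlinarith

lemma bound_int : IntegrableOn (fun w : ℝ => 1 + 2 * (Real.sqrt w)⁻¹) (Ioc (0:ℝ) 1) := by
  refine Integrable.add ?_ ?_
  · exact (integrableOn_const measure_Ioc_lt_top.ne)
  · refine Integrable.const_mul ?_ 2
    have h1 : IntegrableOn (fun w : ℝ => w ^ (-(1/2) : ℝ)) (Ioc (0:ℝ) 1) :=
      (intervalIntegral.intervalIntegrable_rpow' (by norm_num)).1
    refine h1.congr_fun (fun w hw => ?_) measurableSet_Ioc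
    rw [Real.sqrt_eq_rpow, ← Real.rpow_neg hw.1.le]

lemma T2 : Tendsto (fun ε => LL ε * ∫ w in Ioc (ε * Real.exp 1) 1, rker ε w)
    (𝓝[>] (0:ℝ)) (𝓝 (∫ w in Ioc (0:ℝ) 1, (Real.exp (-w) - 1) * w⁻¹)) := by
  set l := 𝓝[>] (0:ℝ)
  have hsmall : Ioo (0:ℝ) (1/2) ∈ l := Ioo_mem_nhdsGT_of_mem ⟨le_rfl, by norm_num⟩
  have hmain : Tendsto (fun ε => ∫ w in Ioc (0:ℝ) 1,
      (Ioi (ε * Real.exp 1)).indicator (fun w => LL ε * rker ε w) w) l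
      (𝓝 (∫ w in Ioc (0:ℝ) 1, (Real.exp (-w) - 1) * w⁻¹)) := by
    refine tendsto_integral_filter_of_dominated_convergence
      (bound := fun w => 1 + 2 * (Real.sqrt w)⁻¹) ?_ ?_ bound_int ?_
    · exact Eventually.of_forall (fun ε =>
        ((measurable_const.mul (rker_meas ε)).indicator measurableSet_Ioi).aestronglyMeasurable)
    · filter_upwards [hsmall] with ε hε
      filter_upwards [ae_restrict_mem measurableSet_Ioc] with w hw
      obtain ⟨hw0, hw1⟩ := hw
      have hs : 0 < Real.sqrt w := Real.sqrt_pos.2 hw0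
      by_cases hmem : w ∈ Ioi (ε * Real.exp 1)
      · rw [Set.indicator_of_mem hmem]
        have hεw : ε * Real.exp 1 ≤ w := le_of_lt hmem
        have hd : 1 ≤ Real.log w + LL ε := denom_ge_s16 hε.1 hεw
        set d := Real.log w + LL ε with hd_def
        have hd0 : (0:ℝ) < d := by linarith
        have hwd : (0:ℝ) < w * d := by positivity
        have hL : 0 < LL ε := by
          rw [LL_eq]
          have := Real.log_neg hε.1 (by linarith [hε.2] : ε < 1)
          linarith
        have hkey : LL ε * rker ε w = LL ε * ((Real.exp (-w) - 1) * (w * d)⁻¹) := by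
          rw [rker, hd_def, LL]
        rw [Real.norm_eq_abs, hkey, abs_mul, abs_mul, abs_of_pos hL, abs_inv,
          abs_of_pos hwd]
        have h1 : |Real.exp (-w) - 1| ≤ w := abs_exp_sub_one_le hw0.le
        have hdinv : d⁻¹ ≤ 1 := by rw [inv_le_one_iff₀]; right; exact hd
        have hlogw : Real.log w ≤ 0 := Real.log_nonpos hw0.le hw1
        have hstep : LL ε * (|Real.exp (-w) - 1| * (w * d)⁻¹) ≤ LL ε * (w * (w * d)⁻¹) := by
          refine mul_le_mul_of_nonneg_left (mul_le_mul_of_nonneg_right h1 (by positivity)) hL.le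
        have hwid : w * (w * d)⁻¹ = d⁻¹ := by field_simp
        have hLd : LL ε * d⁻¹ ≤ 1 + (-Real.log w) := by
          have hdd : d * d⁻¹ = 1 := mul_inv_cancel₀ (ne_of_gt hd0)
          have hLdd : LL ε = d - Real.log w := by rw [hd_def]; ring
          rw [hLdd]
          have : (d - Real.log w) * d⁻¹ = 1 - Real.log w * d⁻¹ := by
            rw [sub_mul, hdd]
          rw [this]
          nlinarith [inv_pos.2 hd0]
        calc LL ε * (|Real.exp (-w) - 1| * (w * d)⁻¹)
            ≤ LL ε * (w * (w * d)⁻¹) := hstep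
          _ = LL ε * d⁻¹ := by rw [hwid]
          _ ≤ 1 + (-Real.log w) := hLd
          _ ≤ 1 + 2 * (Real.sqrt w)⁻¹ := by linarith [neg_log_le hw0]
      · rw [Set.indicator_of_notMem hmem, norm_zero]
        positivity
    · filter_upwards [ae_restrict_mem measurableSet_Ioc] with w hw
      obtain ⟨hw0, hw1⟩ := hw
      have hev : ∀ᶠ ε in l, ε ∈ Ioo (0:ℝ) (w / Real.exp 1) :=
        Ioo_mem_nhdsGT_of_mem ⟨le_rfl, by positivity⟩
      have hlim : Tendsto (fun ε => ((Real.exp (-w) - 1) * w⁻¹) *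
          (LL ε * (Real.log w + LL ε)⁻¹)) l (𝓝 ((Real.exp (-w) - 1) * w⁻¹)) := by
        have := (ratio_tendsto_s16 (Real.log w)).const_mul ((Real.exp (-w) - 1) * w⁻¹)
        simpa using this
      refine Tendsto.congr' ?_ hlim
      filter_upwards [hev] with ε hε
      have hmem : w ∈ Ioi (ε * Real.exp 1) := by
        rw [Set.mem_Ioi]
        have := hε.2
        rw [lt_div_iff₀ (Real.exp_pos 1)] at this
        linarith
      rw [Set.indicator_of_mem hmem, rker, ← LL, mul_inv]
      ring
  refine hmain.congr' ?_
  filter_upwards [hsmall] with ε hε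
  rw [setIntegral_indicator measurableSet_Ioi, Set.Ioc_inter_Ioi,
    show ((0:ℝ) ⊔ ε * Real.exp 1) = ε * Real.exp 1 from
      sup_eq_right.2 (mul_nonneg hε.1.le (Real.exp_pos 1).le),
    integral_const_mul]

lemma T3 : Tendsto (fun ε => LL ε * ∫ w in Ioi (1:ℝ), kker ε w)
    (𝓝[>] (0:ℝ)) (𝓝 (∫ w in Ioi (1:ℝ), Real.exp (-w) * w⁻¹)) := by
  set l := 𝓝[>] (0:ℝ)
  have hsmall : Ioo (0:ℝ) ((Real.exp 1)⁻¹) ∈ l := Ioo_mem_nhdsGT_of_mem ⟨le_rfl, by positivity⟩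
  have hmain : Tendsto (fun ε => ∫ w in Ioi (1:ℝ), LL ε * kker ε w) l
      (𝓝 (∫ w in Ioi (1:ℝ), Real.exp (-w) * w⁻¹)) := by
    refine tendsto_integral_filter_of_dominated_convergence
      (bound := fun w => Real.exp (-w)) ?_ ?_ ?_ ?_
    · exact Eventually.of_forall (fun ε =>
        (measurable_const.mul (kker_meas ε)).aestronglyMeasurable)
    · filter_upwards [hsmall] with ε hε
      filter_upwards [ae_restrict_mem measurableSet_Ioi] with w hw
      rw [Set.mem_Ioi] at hw
      have hw0 : (0:ℝ) < w := by linarith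
      have hεw : ε * Real.exp 1 ≤ w := by
        have h1 : ε * Real.exp 1 < 1 := by
          have h2 := mul_lt_mul_of_pos_right hε.2 (Real.exp_pos 1)
          rwa [inv_mul_cancel₀ (Real.exp_ne_zero 1)] at h2
        linarith
      have hd : 1 ≤ Real.log w + LL ε := denom_ge_s16 hε.1 hεw
      set d := Real.log w + LL ε with hd_def
      have hd0 : (0:ℝ) < d := by linarith
      have hwd : (0:ℝ) < w * d := by positivity
      have hlogw : 0 ≤ Real.log w := Real.log_nonneg hw.le
      have hL : 0 < LL ε := by
        rw [LL_eq]
        have h2 : ε < 1 := by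
          have h3 : (Real.exp 1)⁻¹ < 1 := by
            rw [inv_lt_one_iff₀]; right
            have := Real.add_one_le_exp (1:ℝ); linarith
          linarith [hε.2]
        have := Real.log_neg hε.1 h2
        linarith
      have hkey : LL ε * kker ε w = LL ε * (Real.exp (-w) * (w * d)⁻¹) := by
        rw [kker, hd_def, LL]
      rw [Real.norm_eq_abs, hkey, abs_mul, abs_mul, abs_of_pos hL,
        abs_of_pos (Real.exp_pos _), abs_inv, abs_of_pos hwd]
      have hLled : LL ε ≤ d := by rw [hd_def]; linarith
      have hwinv : (w * d)⁻¹ = w⁻¹ * d⁻¹ := mul_inv _ _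
      have hw_inv : w⁻¹ ≤ 1 := by rw [inv_le_one_iff₀]; right; linarith
      have hLd : LL ε * d⁻¹ ≤ 1 := by
        have hdd : d * d⁻¹ = 1 := mul_inv_cancel₀ (ne_of_gt hd0)
        nlinarith [inv_pos.2 hd0]
      calc LL ε * (Real.exp (-w) * (w * d)⁻¹)
          = Real.exp (-w) * ((LL ε * d⁻¹) * w⁻¹) := by rw [hwinv]; ring
        _ ≤ Real.exp (-w) * 1 := by
            refine mul_le_mul_of_nonneg_left ?_ (Real.exp_pos _).le
            nlinarith [inv_pos.2 hw0, hL.le]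
        _ = Real.exp (-w) := mul_one _
    · simpa [IntegrableOn] using exp_neg_integrableOn_Ioi 1 one_pos
    · filter_upwards [ae_restrict_mem measurableSet_Ioi] with w hw
      rw [Set.mem_Ioi] at hw
      have hw0 : (0:ℝ) < w := by linarith
      have hlim : Tendsto (fun ε => (Real.exp (-w) * w⁻¹) *
          (LL ε * (Real.log w + LL ε)⁻¹)) l (𝓝 (Real.exp (-w) * w⁻¹)) := by
        have := (ratio_tendsto_s16 (Real.log w)).const_mul (Real.exp (-w) * w⁻¹)
        simpa using this
      refine Tendsto.congr ?_ hlim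
      intro ε
      rw [kker, ← LL, mul_inv]
      ring
  refine hmain.congr (fun ε => ?_)
  rw [integral_const_mul]


noncomputable def RR (ε : ℝ) : ℝ :=
  (∫ w in Set.Ioc (ε * Real.exp 1) 1, rker ε w) + ∫ w in Set.Ioi (1:ℝ), kker ε w

lemma aInt_decomp {σ : ℝ} (hσ1 : 1 < σ) (hσ2 : σ < 1 + (Real.exp 1)⁻¹) :
    aInt σ = Real.log (LL (σ - 1)) + RR (σ - 1) := by
  set ε := σ - 1 with hεdef
  have hε : 0 < ε := by simp only [hεdef]; linarith
  have hε1 : ε * Real.exp 1 ≤ 1 := by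
    have h2 := mul_lt_mul_of_pos_right (show ε < (Real.exp 1)⁻¹ by
      simp only [hεdef]; linarith) (Real.exp_pos 1)
    rw [inv_mul_cancel₀ (Real.exp_ne_zero 1)] at h2
    linarith
  have hσε : σ = 1 + ε := by simp only [hεdef]; ring
  rw [hσε, sub1 hε, sub2 hε, kker_split hε hε1, Ioc_split hε, base_eval hε hε1, RR]
  ring

lemma tsum_eq {σ : ℝ} (hσ : 1 < σ) :
    (∑' n : ℕ, ((n.factorial : ℝ≥0∞))⁻¹ *
      ∫⁻ u in Set.Ici (1 : ℝ), ENNReal.ofReal (u ^ (-σ)) ∂(mpow measA n)).toReal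
      = Real.exp (aInt σ) := by
  have h1 : ∀ n : ℕ, ((n.factorial : ℝ≥0∞))⁻¹ *
      (∫⁻ u in Set.Ici (1 : ℝ), ENNReal.ofReal (u ^ (-σ)) ∂(mpow measA n))
      = ENNReal.ofReal ((aInt σ) ^ n / n.factorial) := by
    intro n
    have h2 : (∫⁻ u in Set.Ici (1 : ℝ), ENNReal.ofReal (u ^ (-σ)) ∂(mpow measA n))
        = mel (mpow measA n) σ := rfl
    rw [h2, mel_mpow, melA_eq hσ, ← ENNReal.ofReal_pow (aInt_nonneg σ),
      show ((n.factorial : ℝ≥0∞))⁻¹ = ENNReal.ofReal (((n.factorial : ℝ))⁻¹) by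
        rw [ENNReal.ofReal_inv_of_pos (by positivity), ENNReal.ofReal_natCast],
      ← ENNReal.ofReal_mul (by positivity)]
    congr 1
    field_simp
  rw [tsum_congr h1, ← ENNReal.ofReal_tsum_of_nonneg
    (fun n => div_nonneg (pow_nonneg (aInt_nonneg σ) n) (by positivity))
    (Real.summable_pow_div_factorial _),
    ENNReal.toReal_ofReal (tsum_nonneg
      (fun n => div_nonneg (pow_nonneg (aInt_nonneg σ) n) (by positivity)))]
  rw [Real.exp_eq_exp_ℝ, NormedSpace.exp_eq_tsum ℝ]
  exact tsum_congr (fun n => by rw [smul_eq_mul, div_eq_mul_inv, mul_comm])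

lemma hLRR : Tendsto (fun ε => LL ε * RR ε) (𝓝[>] (0:ℝ))
    (𝓝 ((∫ w in Set.Ioc (0:ℝ) 1, (Real.exp (-w) - 1) * w⁻¹)
      + ∫ w in Set.Ioi (1:ℝ), Real.exp (-w) * w⁻¹)) :=
  (T2.add T3).congr (fun ε => (mul_add _ _ _).symm)

lemma hRR0 : Tendsto RR (𝓝[>] (0:ℝ)) (𝓝 0) := by
  have h1 := hLRR.mul (LL_tendsto.inv_tendsto_atTop)
  rw [mul_zero] at h1
  refine Tendsto.congr' ?_ h1
  filter_upwards [LL_tendsto.eventually_gt_atTop 0] with ε h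
  rw [Pi.inv_apply, mul_assoc, mul_comm (RR ε), ← mul_assoc, mul_inv_cancel₀ h.ne', one_mul]

lemma mainG : Tendsto (fun ε => Real.exp (Real.log (LL ε) + RR ε)
    - (LL ε + ((∫ w in Set.Ioc (0:ℝ) 1, (Real.exp (-w) - 1) * w⁻¹)
      + ∫ w in Set.Ioi (1:ℝ), Real.exp (-w) * w⁻¹))) (𝓝[>] (0:ℝ)) (𝓝 0) := by
  set c : ℝ := (∫ w in Set.Ioc (0:ℝ) 1, (Real.exp (-w) - 1) * w⁻¹)
      + ∫ w in Set.Ioi (1:ℝ), Real.exp (-w) * w⁻¹ with hc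
  set l := 𝓝[>] (0:ℝ)
  have hev : ∀ᶠ ε in l, 0 < LL ε := LL_tendsto.eventually_gt_atTop 0
  have hr1 : ∀ᶠ ε in l, |RR ε| ≤ 1 := by
    filter_upwards [hRR0 (Ioo_mem_nhds (by norm_num : (-1:ℝ) < 0) (by norm_num : (0:ℝ) < 1))]
      with ε hε
    rw [abs_le]
    exact ⟨hε.1.le, hε.2.le⟩
  have t2 : Tendsto (fun ε => LL ε * RR ε - c) l (𝓝 0) := by
    simpa [hc] using hLRR.sub_const c
  have t1 : Tendsto (fun ε => LL ε * (Real.exp (RR ε) - 1 - RR ε)) l (𝓝 0) := by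
    refine squeeze_zero_norm' (a := fun ε => |LL ε * RR ε| * |RR ε|) ?_ ?_
    · filter_upwards [hev, hr1] with ε hL hR
      rw [Real.norm_eq_abs, abs_mul, abs_of_pos hL, abs_mul, abs_of_pos hL, mul_assoc,
        abs_mul_abs_self]
      have h3 := Real.abs_exp_sub_one_sub_id_le hR
      calc LL ε * |Real.exp (RR ε) - 1 - RR ε| ≤ LL ε * (RR ε)^2 :=
            mul_le_mul_of_nonneg_left h3 hL.le
        _ = LL ε * (RR ε * RR ε) := by ring
    · have := (hLRR.abs).mul (hRR0.abs)
      simpa using this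
  have hsum := t1.add t2
  rw [add_zero] at hsum
  refine Tendsto.congr' ?_ hsum
  filter_upwards [hev] with ε hL
  rw [Real.exp_add, Real.exp_log hL]
  ring

/-- there are constants `b₁ > 0` and `b₂` with
`∑ (1/n!) ∫_{[1,∞)} u^{-σ} d(A^{*n})(u) = b₁ log(1/(σ-1)) + b₂ + o(1)` as `σ → 1⁺`. -/
theorem statement16 :
    ∃ b₁ > (0 : ℝ), ∃ b₂ : ℝ,
      Tendsto
        (fun σ : ℝ =>
          (∑' n : ℕ, ((n.factorial : ℝ≥0∞))⁻¹ *
            ∫⁻ u in Set.Ici (1 : ℝ), ENNReal.ofReal (u ^ (-σ)) ∂(mpow measA n)).toReal -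
          (b₁ * Real.log (1 / (σ - 1)) + b₂))
        (𝓝[>] (1 : ℝ)) (𝓝 0) := by
  refine ⟨1, one_pos, (∫ w in Set.Ioc (0:ℝ) 1, (Real.exp (-w) - 1) * w⁻¹)
      + ∫ w in Set.Ioi (1:ℝ), Real.exp (-w) * w⁻¹, ?_⟩
  have hmap : Tendsto (fun σ : ℝ => σ - 1) (𝓝[>] (1:ℝ)) (𝓝[>] (0:ℝ)) := by
    refine tendsto_nhdsWithin_of_tendsto_nhds_of_eventually_within _ ?_ ?_
    · have h0 : Tendsto (fun σ : ℝ => σ - 1) (𝓝 (1:ℝ)) (𝓝 0) := by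
        have h1 := (continuous_sub_right (1:ℝ)).tendsto (1:ℝ)
        simpa using h1
      exact h0.mono_left nhdsWithin_le_nhds
    · filter_upwards [self_mem_nhdsWithin] with σ hσ
      simp only [Set.mem_Ioi] at hσ ⊢
      linarith
  have hcomp := mainG.comp hmap
  refine Tendsto.congr' ?_ hcomp
  filter_upwards [Ioo_mem_nhdsGT_of_mem
    (Set.left_mem_Ico.2 (lt_add_of_pos_right 1 (inv_pos.2 (Real.exp_pos 1))))] with σ hσ
  obtain ⟨hσ1, hσ2⟩ := hσ
  have hd := aInt_decomp hσ1 hσ2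
  simp only [Function.comp_apply]
  rw [← hd, tsum_eq hσ1, one_mul]
  rfl

end Aux
end

section
/- Let μ be a nonnegative Borel measure on ℝ supported in [1,∞) and finite on compact sets, and let ν = exp^*(μ) := ∑_{n=0}^∞ (1/n!) μ^{*n}. Then for every x ≥ 1: ∫_{[1,x]} log t · dν(t) = ∬_{[1,∞)×[1,∞), uv ≤ x} log u · dμ(u) dν(v); that is, the measure log t · dν(t) equals the multiplicative convolution of log u · dμ(u) with dν (the generalized Chebyshev identity L exp^*(μ) = (Lμ) ∗ exp^*(μ)). -/
open MeasureTheory Filter Topology Asymptotics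
open scoped ENNReal

lemma hm_meas : Measurable fun p : ℝ × ℝ => p.1 * p.2 :=
  measurable_fst.mul measurable_snd

instance mconv.sfinite (α β : Measure ℝ) [SFinite α] [SFinite β] : SFinite (mconv α β) := by
  unfold mconv; infer_instance

instance mpow.sfinite (μ : Measure ℝ) [SFinite μ] : ∀ n, SFinite (mpow μ n)
  | 0 => by rw [mpow]; infer_instance
  | n+1 => by have := mpow.sfinite μ n; rw [mpow]; infer_instance

lemma withDensity_map' {X Y : Type*} [MeasurableSpace X] [MeasurableSpace Y]
    (ρ : Measure X) {m : X → Y} (hm : Measurable m) {f : Y → ℝ≥0∞} (hf : Measurable f) :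
    (ρ.map m).withDensity f = (ρ.withDensity fun x => f (m x)).map m := by
  ext s hs
  rw [withDensity_apply _ hs, Measure.map_apply hm hs, withDensity_apply _ (hm hs),
    setLIntegral_map hs hf hm]

lemma prod_wd_fst (α β : Measure ℝ) [SFinite α] [SFinite β] {f : ℝ → ℝ≥0∞} (hf : Measurable f) :
    (α.withDensity f).prod β = (α.prod β).withDensity fun p => f p.1 := by
  ext s hs
  rw [Measure.prod_apply hs, withDensity_apply _ hs,
    lintegral_withDensity_eq_lintegral_mul _ hf (measurable_measure_prodMk_left hs),
    ← lintegral_indicator hs _,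
    lintegral_prod (s.indicator fun a => f a.1) (((hf.comp measurable_fst).indicator hs).aemeasurable)]
  congr 1; funext a
  have h1 : ∀ b : ℝ, s.indicator (fun p : ℝ × ℝ => f p.1) (a, b)
      = (Prod.mk a ⁻¹' s).indicator (fun _ => f a) b := by
    intro b
    by_cases hb : (a, b) ∈ s <;> simp [Set.indicator, hb, Set.mem_preimage]
  simp_rw [h1]
  rw [lintegral_indicator (measurable_prodMk_left hs) _, setLIntegral_const]
  rfl

lemma mconv_zero_left (β : Measure ℝ) : mconv 0 β = 0 := by
  unfold mconv
  rw [Measure.zero_prod, Measure.map_zero]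

lemma mconv_comm (α β : Measure ℝ) [SFinite α] [SFinite β] : mconv α β = mconv β α := by
  unfold mconv
  rw [← Measure.prod_swap, Measure.map_map hm_meas measurable_swap]
  congr 1
  funext p
  exact mul_comm _ _


instance smul_sfinite (c : ℝ≥0∞) (β : Measure ℝ) [SFinite β] : SFinite (c • β) := by
  rw [← withDensity_const]; infer_instance

lemma prod_wd_snd (α β : Measure ℝ) [SFinite α] [SFinite β] {f : ℝ → ℝ≥0∞} (hf : Measurable f) :
    α.prod (β.withDensity f) = (α.prod β).withDensity fun p => f p.2 := by
  ext s hs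
  rw [Measure.prod_apply hs, withDensity_apply _ hs, ← lintegral_indicator hs _,
    lintegral_prod (s.indicator fun a => f a.2) (((hf.comp measurable_snd).indicator hs).aemeasurable)]
  congr 1; funext a
  have h1 : ∀ b : ℝ, s.indicator (fun p : ℝ × ℝ => f p.2) (a, b)
      = (Prod.mk a ⁻¹' s).indicator f b := by
    intro b
    by_cases hb : (a, b) ∈ s <;> simp [Set.indicator, hb, Set.mem_preimage]
  simp_rw [h1]
  rw [lintegral_indicator (measurable_prodMk_left hs) _, withDensity_apply _ (measurable_prodMk_left hs)]

lemma mconv_assoc (α β γ : Measure ℝ) [SFinite α] [SFinite β] [SFinite γ] :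
    mconv (mconv α β) γ = mconv α (mconv β γ) := by
  unfold mconv
  have h1 := Measure.map_prod_map (f := fun p : ℝ × ℝ => p.1 * p.2) (g := id)
    (α.prod β) γ hm_meas measurable_id
  rw [Measure.map_id] at h1
  have h2 := Measure.map_prod_map (f := (id : ℝ → ℝ)) (g := fun p : ℝ × ℝ => p.1 * p.2)
    α (β.prod γ) measurable_id hm_meas
  rw [Measure.map_id] at h2
  rw [h1, h2, Measure.map_map hm_meas (hm_meas.prodMap measurable_id),
    Measure.map_map hm_meas (measurable_id.prodMap hm_meas),
    ← Measure.prodAssoc_prod, Measure.map_map (hm_meas.comp (measurable_id.prodMap hm_meas))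
      MeasurableEquiv.prodAssoc.measurable]
  congr 1
  funext p
  exact mul_assoc _ _ _

lemma prod_smul_right (α β : Measure ℝ) [SFinite α] [SFinite β] (c : ℝ≥0∞) :
    α.prod (c • β) = c • α.prod β := by
  ext s hs
  rw [Measure.prod_apply hs, Measure.smul_apply, Measure.prod_apply hs, smul_eq_mul,
    ← lintegral_const_mul c (measurable_measure_prodMk_left hs)]
  simp [Measure.smul_apply]

lemma mconv_smul_right (α β : Measure ℝ) [SFinite α] [SFinite β] (c : ℝ≥0∞) :
    mconv α (c • β) = c • mconv α β := by
  unfold mconv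
  rw [prod_smul_right, Measure.map_smul]

instance Lm_sfinite0 (ρ : Measure ℝ) [SFinite ρ] : SFinite (ρ.withDensity fun t => ENNReal.ofReal (Real.log t)) := inferInstance

lemma hg_meas : Measurable fun t : ℝ => ENNReal.ofReal (Real.log t) :=
  ENNReal.measurable_ofReal.comp Real.measurable_log

noncomputable def Lm (ρ : Measure ℝ) : Measure ℝ :=
  ρ.withDensity fun t => ENNReal.ofReal (Real.log t)

lemma ae_ge (α β : Measure ℝ) [SFinite α] [SFinite β]
    (hα : α (Set.Iio 1) = 0) (hβ : β (Set.Iio 1) = 0) :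
    ∀ᵐ p ∂(α.prod β), 1 ≤ p.1 ∧ 1 ≤ p.2 := by
  have h1 : (α.prod β) ((Set.Iio 1) ×ˢ (Set.univ : Set ℝ)) = 0 := by
    rw [Measure.prod_prod, hα, zero_mul]
  have h2 : (α.prod β) ((Set.univ : Set ℝ) ×ˢ (Set.Iio 1)) = 0 := by
    rw [Measure.prod_prod, hβ, mul_zero]
  rw [ae_iff]
  refine measure_mono_null ?_ (measure_union_null h1 h2)
  intro p hp
  simp only [Set.mem_setOf_eq, not_and_or, not_le] at hp
  rcases hp with hp | hp
  · exact Or.inl ⟨hp, Set.mem_univ _⟩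
  · exact Or.inr ⟨Set.mem_univ _, hp⟩

lemma mconv_null_s18 (α β : Measure ℝ) [SFinite α] [SFinite β]
    (hα : α (Set.Iio 1) = 0) (hβ : β (Set.Iio 1) = 0) :
    mconv α β (Set.Iio 1) = 0 := by
  unfold mconv
  rw [Measure.map_apply hm_meas measurableSet_Iio]
  rw [measure_eq_zero_iff_ae_notMem]
  filter_upwards [ae_ge α β hα hβ] with p hp h
  simp only [Set.mem_preimage, Set.mem_Iio] at h
  nlinarith [hp.1, hp.2]

lemma Lm_mconv (α β : Measure ℝ) [SFinite α] [SFinite β]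
    (hα : α (Set.Iio 1) = 0) (hβ : β (Set.Iio 1) = 0) :
    Lm (mconv α β) = mconv (Lm α) β + mconv α (Lm β) := by
  unfold Lm mconv
  rw [withDensity_map' _ hm_meas hg_meas]
  have hae : (fun x : ℝ × ℝ => ENNReal.ofReal (Real.log (x.1 * x.2)))
      =ᵐ[α.prod β] fun x => ENNReal.ofReal (Real.log x.1) + ENNReal.ofReal (Real.log x.2) := by
    filter_upwards [ae_ge α β hα hβ] with p hp
    have h1 : (0:ℝ) < p.1 := lt_of_lt_of_le one_pos hp.1
    have h2 : (0:ℝ) < p.2 := lt_of_lt_of_le one_pos hp.2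
    rw [Real.log_mul (ne_of_gt h1) (ne_of_gt h2),
      ENNReal.ofReal_add (Real.log_nonneg hp.1) (Real.log_nonneg hp.2)]
  have hsplit : (fun x : ℝ × ℝ => ENNReal.ofReal (Real.log x.1) + ENNReal.ofReal (Real.log x.2))
      = (fun x : ℝ × ℝ => ENNReal.ofReal (Real.log x.1))
        + (fun x : ℝ × ℝ => ENNReal.ofReal (Real.log x.2)) := rfl
  rw [withDensity_congr_ae hae, hsplit,
    withDensity_add_right (g := fun x : ℝ × ℝ => ENNReal.ofReal (Real.log x.2)) _ (hg_meas.comp measurable_snd),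
    Measure.map_add _ _ hm_meas,
    ← prod_wd_fst _ _ hg_meas, ← prod_wd_snd _ _ hg_meas]

lemma Lm_dirac : Lm (Measure.dirac 1) = 0 := by
  unfold Lm
  ext s hs
  rw [withDensity_apply _ hs, Measure.coe_zero, Pi.zero_apply,
    ← lintegral_indicator hs _, lintegral_dirac' _ (hg_meas.indicator hs)]
  by_cases h : (1:ℝ) ∈ s <;> simp [Set.indicator, h, Real.log_one]

lemma mpow_null_s18 (μ : Measure ℝ) [SFinite μ] (hμ0 : μ (Set.Iio 1) = 0) :
    ∀ n, mpow μ n (Set.Iio 1) = 0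
  | 0 => by
    show Measure.dirac 1 (Set.Iio 1) = 0
    rw [Measure.dirac_apply' _ measurableSet_Iio]
    simp
  | n+1 => by
    rw [mpow]
    exact mconv_null_s18 _ _ (mpow_null_s18 μ hμ0 n) hμ0

lemma Lm_mpow (μ : Measure ℝ) [SFinite μ] (hμ0 : μ (Set.Iio 1) = 0) :
    ∀ n : ℕ, Lm (mpow μ (n+1)) = ((n:ℝ≥0∞)+1) • mconv (Lm μ) (mpow μ n)
  | 0 => by
    have e0 : mpow μ 0 = Measure.dirac 1 := rfl
    have e1 : mpow μ (0+1) = mconv (Measure.dirac 1) μ := rfl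
    rw [e1, e0, Lm_mconv _ _ (by rw [Measure.dirac_apply' _ measurableSet_Iio]; simp) hμ0,
      Lm_dirac]
    simp only [Nat.cast_zero, zero_add, one_smul]
    have : SFinite (Lm μ) := by unfold Lm; infer_instance
    rw [mconv_zero_left, zero_add, mconv_comm]
  | n+1 => by
    have hLμ : SFinite (Lm μ) := by unfold Lm; infer_instance
    rw [show mpow μ (n+2) = mconv (mpow μ (n+1)) μ from rfl,
      Lm_mconv _ _ (mpow_null_s18 μ hμ0 (n+1)) hμ0, Lm_mpow μ hμ0 n]
    have h1 : mconv (((n:ℝ≥0∞)+1) • mconv (Lm μ) (mpow μ n)) μ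
        = ((n:ℝ≥0∞)+1) • mconv (Lm μ) (mpow μ (n+1)) := by
      rw [mconv_comm _ μ, mconv_smul_right, mconv_comm μ _, mconv_assoc]
      rfl
    rw [h1, mconv_comm (mpow μ (n+1)) (Lm μ)]
    have hc : ((n+1:ℕ):ℝ≥0∞)+1 = ((n:ℝ≥0∞)+1) + 1 := by push_cast; ring
    rw [hc, add_smul ((n:ℝ≥0∞)+1) 1, one_smul]

instance expStar_sfinite (μ : Measure ℝ) [SFinite μ] : SFinite (expStar μ) := by
  unfold expStar; infer_instance

lemma expStar_null (μ : Measure ℝ) [SFinite μ] (hμ0 : μ (Set.Iio 1) = 0) :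
    expStar μ (Set.Iio 1) = 0 := by
  unfold expStar
  rw [Measure.sum_apply _ measurableSet_Iio]
  simp [Measure.smul_apply, mpow_null_s18 μ hμ0]

lemma coeff (n : ℕ) :
    (((n+1).factorial : ℝ≥0∞))⁻¹ * ((n:ℝ≥0∞)+1) = ((n.factorial : ℝ≥0∞))⁻¹ := by
  have ha0 : ((n:ℝ≥0∞)+1) ≠ 0 := by
    simp
  have hat : ((n:ℝ≥0∞)+1) ≠ ⊤ := by
    exact_mod_cast ENNReal.natCast_ne_top (n+1)
  have h1 : (((n+1).factorial : ℕ) : ℝ≥0∞) = ((n:ℝ≥0∞)+1) * (n.factorial : ℝ≥0∞) := by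
    rw [Nat.factorial_succ]; push_cast; ring
  rw [h1, ENNReal.mul_inv (Or.inl ha0) (Or.inl hat), mul_right_comm,
    ENNReal.inv_mul_cancel ha0 hat, one_mul]

lemma sum_shift (f g : ℕ → Measure ℝ) (h0 : f 0 = 0) (hsh : ∀ n, f (n+1) = g n) :
    Measure.sum f = Measure.sum g := by
  ext s hs
  rw [Measure.sum_apply _ hs, Measure.sum_apply _ hs,
    tsum_eq_zero_add' ENNReal.summable]
  simp [h0, hsh]

lemma Lm_expStar (μ : Measure ℝ) [SFinite μ] (hμ0 : μ (Set.Iio 1) = 0) :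
    Lm (expStar μ) = mconv (Lm μ) (expStar μ) := by
  have hLμ : SFinite (Lm μ) := by unfold Lm; infer_instance
  have hL : Lm (expStar μ)
      = Measure.sum (fun n => ((n.factorial : ℝ≥0∞))⁻¹ • Lm (mpow μ n)) := by
    unfold expStar Lm
    rw [withDensity_sum]
    congr 1
    funext n
    rw [withDensity_smul_measure]
  have hR : mconv (Lm μ) (expStar μ)
      = Measure.sum (fun n => ((n.factorial : ℝ≥0∞))⁻¹ • mconv (Lm μ) (mpow μ n)) := by
    unfold expStar mconv
    rw [Measure.prod_sum_right, Measure.map_sum hm_meas.aemeasurable]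
    congr 1
    funext n
    have := mconv_smul_right (Lm μ) (mpow μ n) ((n.factorial : ℝ≥0∞))⁻¹
    unfold mconv at this
    rw [← this, prod_smul_right]
  rw [hL, hR]
  apply sum_shift
  · rw [show mpow μ 0 = Measure.dirac 1 from rfl, Lm_dirac, smul_zero]
  · intro n
    rw [Lm_mpow μ hμ0 n, smul_smul, coeff]

/-- generalized Chebyshev identity `L exp^*(μ) = (Lμ) ∗ exp^*(μ)`:
for `ν = exp^*(μ)` and every `x ≥ 1`,
`∫_{[1,x]} log t dν(t) = ∬_{uv ≤ x, u,v ≥ 1} log u dμ(u) dν(v)`. -/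
theorem statement18
    (μ : Measure ℝ) [IsLocallyFiniteMeasure μ] (hμ0 : μ (Set.Iio 1) = 0) :
    ∀ x : ℝ, 1 ≤ x →
      ∫⁻ t in Set.Icc (1 : ℝ) x, ENNReal.ofReal (Real.log t) ∂(expStar μ)
        = ∫⁻ p in {p : ℝ × ℝ | p.1 ∈ Set.Ici (1 : ℝ) ∧ p.2 ∈ Set.Ici (1 : ℝ) ∧ p.1 * p.2 ≤ x},
            ENNReal.ofReal (Real.log p.1) ∂(μ.prod (expStar μ)) := by
  intro x hx
  set ν := expStar μ with hν
  have hνnull : ν (Set.Iio 1) = 0 := expStar_null μ hμ0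
  have hset : (fun p : ℝ × ℝ => p.1 * p.2) ⁻¹' Set.Icc 1 x
      =ᵐ[μ.prod ν] {p : ℝ × ℝ | p.1 ∈ Set.Ici (1:ℝ) ∧ p.2 ∈ Set.Ici (1:ℝ) ∧ p.1 * p.2 ≤ x} := by
    rw [Filter.eventuallyEq_set]
    filter_upwards [ae_ge μ ν hμ0 hνnull] with p hp
    simp only [Set.mem_preimage, Set.mem_Icc, Set.mem_setOf_eq, Set.mem_Ici]
    constructor
    · rintro ⟨h1, h2⟩; exact ⟨hp.1, hp.2, h2⟩
    · rintro ⟨_, _, h2⟩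
      refine ⟨le_trans hp.1 (le_mul_of_one_le_right (by linarith [hp.1]) hp.2), h2⟩
  calc ∫⁻ t in Set.Icc (1 : ℝ) x, ENNReal.ofReal (Real.log t) ∂ν
      = Lm ν (Set.Icc 1 x) := (withDensity_apply _ measurableSet_Icc).symm
    _ = mconv (Lm μ) ν (Set.Icc 1 x) := by rw [Lm_expStar μ hμ0]
    _ = ((Lm μ).prod ν) ((fun p : ℝ × ℝ => p.1 * p.2) ⁻¹' Set.Icc 1 x) := by
        unfold mconv
        exact Measure.map_apply hm_meas measurableSet_Icc
    _ = ((μ.prod ν).withDensity fun p => ENNReal.ofReal (Real.log p.1))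
          ((fun p : ℝ × ℝ => p.1 * p.2) ⁻¹' Set.Icc 1 x) := by
        rw [show Lm μ = μ.withDensity fun t => ENNReal.ofReal (Real.log t) from rfl,
          prod_wd_fst μ ν hg_meas]
    _ = ∫⁻ p in (fun p : ℝ × ℝ => p.1 * p.2) ⁻¹' Set.Icc 1 x,
          ENNReal.ofReal (Real.log p.1) ∂(μ.prod ν) :=
        withDensity_apply _ (hm_meas measurableSet_Icc)
    _ = ∫⁻ p in {p : ℝ × ℝ | p.1 ∈ Set.Ici (1:ℝ) ∧ p.2 ∈ Set.Ici (1:ℝ) ∧ p.1 * p.2 ≤ x},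
          ENNReal.ofReal (Real.log p.1) ∂(μ.prod ν) := setLIntegral_congr hset
end
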